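/- arXiv:1102.0480 — 4 statements merged into one kernel-verified Lean document; each statement's English description precedes it below -/
import Mathlib

section
/- Let B solve the resistive induction equation on Ω×(0,T) and satisfy the homogeneous Dirichlet boundary condition B(x,y,t) = 0 for all (x,y) ∈ ∂Ω and all t ∈ [0,T]. Then for every t ∈ (0,T): (d/dt) ∫_Ω ((B¹)² + (B²)²) dx dy + 2ε ∫_Ω (∂_x B² − ∂_y B¹)² dx dy ≤ 2α ∫_Ω ((B¹)² + (B²)²) dx dy. -/
open MeasureTheory

/-- Partial derivative in `x` of a function of `(x,y,t)`. -/
noncomputable def pdx (f : ℝ → ℝ → ℝ → ℝ) : ℝ → ℝ → ℝ → ℝ :=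
  fun x y t => deriv (fun s => f s y t) x

/-- Partial derivative in `y` of a function of `(x,y,t)`. -/
noncomputable def pdy (f : ℝ → ℝ → ℝ → ℝ) : ℝ → ℝ → ℝ → ℝ :=
  fun x y t => deriv (fun s => f x s t) y

/-- Partial derivative in `t` of a function of `(x,y,t)`. -/
noncomputable def pdt (f : ℝ → ℝ → ℝ → ℝ) : ℝ → ℝ → ℝ → ℝ :=
  fun x y t => deriv (fun s => f x y s) t

/-- Partial derivative in `x` of a function of `(x,y)`. -/
noncomputable def pdx2 (f : ℝ → ℝ → ℝ) : ℝ → ℝ → ℝ :=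
  fun x y => deriv (fun s => f s y) x

/-- Partial derivative in `y` of a function of `(x,y)`. -/
noncomputable def pdy2 (f : ℝ → ℝ → ℝ) : ℝ → ℝ → ℝ :=
  fun x y => deriv (fun s => f x s) y

namespace IndObf
open Set

def K : Set (ℝ × ℝ) := Icc 0 1 ×ˢ Icc 0 1
def Q : Set (ℝ × ℝ) := Ioo 0 1 ×ˢ Ioo 0 1
def cube (T : ℝ) : Set (ℝ × ℝ × ℝ) := Icc 0 1 ×ˢ Icc 0 1 ×ˢ Icc 0 T
def cubeO (T : ℝ) : Set (ℝ × ℝ × ℝ) := Ioo 0 1 ×ˢ Ioo 0 1 ×ˢ Ioo 0 T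

noncomputable def px (f : ℝ × ℝ → ℝ) : ℝ × ℝ → ℝ :=
  fun p => fderivWithin ℝ f K p (1, 0)
noncomputable def py (f : ℝ × ℝ → ℝ) : ℝ × ℝ → ℝ :=
  fun p => fderivWithin ℝ f K p (0, 1)
noncomputable def pt (T : ℝ) (g : ℝ × ℝ × ℝ → ℝ) : ℝ × ℝ × ℝ → ℝ :=
  fun r => fderivWithin ℝ g (cube T) r (0, 0, 1)

def sl (B : ℝ → ℝ → ℝ → ℝ) (t : ℝ) : ℝ × ℝ → ℝ := fun p => B p.1 p.2 t
def sl2 (u : ℝ → ℝ → ℝ) : ℝ × ℝ → ℝ := fun p => u p.1 p.2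

lemma hK_unique : UniqueDiffOn ℝ K :=
  (uniqueDiffOn_Icc one_pos).prod (uniqueDiffOn_Icc one_pos)
lemma hQK : Q ⊆ K := Set.prod_mono Ioo_subset_Icc_self Ioo_subset_Icc_self
lemma hQopen : IsOpen Q := isOpen_Ioo.prod isOpen_Ioo
lemma hKcompact : IsCompact K := isCompact_Icc.prod isCompact_Icc
lemma hQmeas : MeasurableSet Q := (measurableSet_Ioo.prod measurableSet_Ioo)
lemma mem_nhds_of_Q {p : ℝ × ℝ} (hp : p ∈ Q) : K ∈ nhds p :=
  Filter.mem_of_superset (hQopen.mem_nhds hp) hQK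

lemma hasFDerivAt_of_Q {f : ℝ × ℝ → ℝ} {n : WithTop ℕ∞} (hf : ContDiffOn ℝ n f K)
    (hn : 1 ≤ n) {p : ℝ × ℝ} (hp : p ∈ Q) :
    HasFDerivAt f (fderivWithin ℝ f K p) p := by
  have h1 : ContDiffAt ℝ n f p := hf.contDiffAt (mem_nhds_of_Q hp)
  have h2 : DifferentiableAt ℝ f p := (h1.differentiableAt (lt_of_lt_of_le zero_lt_one hn).ne')
  rw [fderivWithin_of_mem_nhds (mem_nhds_of_Q hp)]
  exact h2.hasFDerivAt

lemma slicex {f : ℝ × ℝ → ℝ} {n : WithTop ℕ∞} (hf : ContDiffOn ℝ n f K) (hn : 1 ≤ n)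
    {p : ℝ × ℝ} (hp : p ∈ Q) :
    HasDerivAt (fun s => f (s, p.2)) (px f p) p.1 :=
  (hasFDerivAt_of_Q hf hn hp).comp_hasDerivAt p.1
    ((hasDerivAt_id p.1).prodMk (hasDerivAt_const p.1 p.2))

lemma slicey {f : ℝ × ℝ → ℝ} {n : WithTop ℕ∞} (hf : ContDiffOn ℝ n f K) (hn : 1 ≤ n)
    {p : ℝ × ℝ} (hp : p ∈ Q) :
    HasDerivAt (fun s => f (p.1, s)) (py f p) p.2 :=
  (hasFDerivAt_of_Q hf hn hp).comp_hasDerivAt p.2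
    ((hasDerivAt_const p.2 p.1).prodMk (hasDerivAt_id p.2))

lemma contOn_px {f : ℝ × ℝ → ℝ} {n : WithTop ℕ∞} (hf : ContDiffOn ℝ n f K) (hn : 1 ≤ n) :
    ContinuousOn (px f) K := by
  have h := ((hf.fderivWithin hK_unique (m := 0) (by simpa using hn)).continuousOn :
    ContinuousOn (fderivWithin ℝ f K) K)
  exact h.clm_apply continuousOn_const

lemma contOn_py {f : ℝ × ℝ → ℝ} {n : WithTop ℕ∞} (hf : ContDiffOn ℝ n f K) (hn : 1 ≤ n) :
    ContinuousOn (py f) K := by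
  have h := ((hf.fderivWithin hK_unique (m := 0) (by simpa using hn)).continuousOn :
    ContinuousOn (fderivWithin ℝ f K) K)
  exact h.clm_apply continuousOn_const

lemma contDiffOn_px {f : ℝ × ℝ → ℝ} (hf : ContDiffOn ℝ 2 f K) :
    ContDiffOn ℝ 1 (px f) K := by
  have h := hf.fderivWithin hK_unique (m := 1) (by norm_num)
  exact h.clm_apply contDiffOn_const

lemma contDiffOn_py {f : ℝ × ℝ → ℝ} (hf : ContDiffOn ℝ 2 f K) :
    ContDiffOn ℝ 1 (py f) K := by
  have h := hf.fderivWithin hK_unique (m := 1) (by norm_num)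
  exact h.clm_apply contDiffOn_const

lemma integrableOn_of_contOn {h : ℝ × ℝ → ℝ} (hh : ContinuousOn h K) :
    IntegrableOn h Q := (hh.integrableOn_compact hKcompact).mono_set hQK

lemma integral_px_zero (F G : ℝ × ℝ → ℝ) (hF : ContinuousOn F K) (hG : ContinuousOn G K)
    (hd : ∀ p ∈ Q, HasDerivAt (fun s => F (s, p.2)) (G p) p.1)
    (hb : ∀ y ∈ Ioo (0:ℝ) 1, F (0, y) = 0 ∧ F (1, y) = 0) :
    ∫ p in Q, G p = 0 := by
  have hGint : IntegrableOn G Q := integrableOn_of_contOn hG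
  have hGint' : Integrable (fun z : ℝ × ℝ => G z)
      ((volume.restrict (Ioo (0:ℝ) 1)).prod (volume.restrict (Ioo (0:ℝ) 1))) := by
    rw [Measure.prod_restrict]
    simpa [Q, Measure.volume_eq_prod, IntegrableOn] using hGint
  have h1 : ∫ p in Q, G p = ∫ x in Ioo (0:ℝ) 1, ∫ y in Ioo (0:ℝ) 1, G (x, y) := by
    rw [show (volume : Measure (ℝ × ℝ)) = volume.prod volume from Measure.volume_eq_prod ..]
    exact setIntegral_prod G (by simpa [Q, Measure.volume_eq_prod] using hGint)
  have h2 : ∫ x in Ioo (0:ℝ) 1, ∫ y in Ioo (0:ℝ) 1, G (x, y)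
      = ∫ y in Ioo (0:ℝ) 1, ∫ x in Ioo (0:ℝ) 1, G (x, y) :=
    integral_integral_swap hGint'
  have h3 : ∀ y ∈ Ioo (0:ℝ) 1, (∫ x in Ioo (0:ℝ) 1, G (x, y)) = 0 := by
    intro y hy
    have hyI : y ∈ Icc (0:ℝ) 1 := Ioo_subset_Icc_self hy
    have hFc : ContinuousOn (fun x => F (x, y)) (Icc 0 1) := by
      apply hF.comp (Continuous.continuousOn (by fun_prop))
      intro x hx; exact ⟨hx, hyI⟩
    have hGc : ContinuousOn (fun x => G (x, y)) (Icc 0 1) := by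
      apply hG.comp (Continuous.continuousOn (by fun_prop))
      intro x hx; exact ⟨hx, hyI⟩
    have hGi : IntervalIntegrable (fun x => G (x, y)) volume 0 1 := by
      apply ContinuousOn.intervalIntegrable
      rwa [uIcc_of_le (by norm_num)]
    have hftc : ∫ x in (0:ℝ)..1, G (x, y) = F (1, y) - F (0, y) := by
      apply intervalIntegral.integral_eq_sub_of_hasDeriv_right_of_le (by norm_num) hFc
      · intro x hx
        exact ((hd (x, y) ⟨hx, hy⟩).hasDerivWithinAt)
      · exact hGi
    have : ∫ x in Ioo (0:ℝ) 1, G (x, y) = ∫ x in (0:ℝ)..1, G (x, y) := by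
      rw [intervalIntegral.integral_of_le (by norm_num), ← integral_Ioc_eq_integral_Ioo]
    rw [this, hftc, (hb y hy).1, (hb y hy).2, sub_zero]
  calc ∫ p in Q, G p = ∫ y in Ioo (0:ℝ) 1, ∫ x in Ioo (0:ℝ) 1, G (x, y) := h1.trans h2
    _ = ∫ y in Ioo (0:ℝ) 1, (0:ℝ) :=
        setIntegral_congr_fun measurableSet_Ioo (fun y hy => h3 y hy)
    _ = 0 := by simp

lemma integral_py_zero (F G : ℝ × ℝ → ℝ) (hF : ContinuousOn F K) (hG : ContinuousOn G K)
    (hd : ∀ p ∈ Q, HasDerivAt (fun s => F (p.1, s)) (G p) p.2)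
    (hb : ∀ x ∈ Ioo (0:ℝ) 1, F (x, 0) = 0 ∧ F (x, 1) = 0) :
    ∫ p in Q, G p = 0 := by
  have hGint : IntegrableOn G Q := integrableOn_of_contOn hG
  have h1 : ∫ p in Q, G p = ∫ x in Ioo (0:ℝ) 1, ∫ y in Ioo (0:ℝ) 1, G (x, y) := by
    rw [show (volume : Measure (ℝ × ℝ)) = volume.prod volume from Measure.volume_eq_prod ..]
    exact setIntegral_prod G (by simpa [Q, Measure.volume_eq_prod] using hGint)
  have h3 : ∀ x ∈ Ioo (0:ℝ) 1, (∫ y in Ioo (0:ℝ) 1, G (x, y)) = 0 := by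
    intro x hx
    have hxI : x ∈ Icc (0:ℝ) 1 := Ioo_subset_Icc_self hx
    have hFc : ContinuousOn (fun y => F (x, y)) (Icc 0 1) := by
      apply hF.comp (Continuous.continuousOn (by fun_prop))
      intro y hy; exact ⟨hxI, hy⟩
    have hGc : ContinuousOn (fun y => G (x, y)) (Icc 0 1) := by
      apply hG.comp (Continuous.continuousOn (by fun_prop))
      intro y hy; exact ⟨hxI, hy⟩
    have hGi : IntervalIntegrable (fun y => G (x, y)) volume 0 1 := by
      apply ContinuousOn.intervalIntegrable
      rwa [uIcc_of_le (by norm_num)]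
    have hftc : ∫ y in (0:ℝ)..1, G (x, y) = F (x, 1) - F (x, 0) := by
      apply intervalIntegral.integral_eq_sub_of_hasDeriv_right_of_le (by norm_num) hFc
      · intro y hy
        exact ((hd (x, y) ⟨hx, hy⟩).hasDerivWithinAt)
      · exact hGi
    have : ∫ y in Ioo (0:ℝ) 1, G (x, y) = ∫ y in (0:ℝ)..1, G (x, y) := by
      rw [intervalIntegral.integral_of_le (by norm_num), ← integral_Ioc_eq_integral_Ioo]
    rw [this, hftc, (hb x hx).2, (hb x hx).1, sub_zero]
  calc ∫ p in Q, G p = ∫ x in Ioo (0:ℝ) 1, ∫ y in Ioo (0:ℝ) 1, G (x, y) := h1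
    _ = ∫ x in Ioo (0:ℝ) 1, (0:ℝ) :=
        setIntegral_congr_fun measurableSet_Ioo (fun x hx => h3 x hx)
    _ = 0 := by simp

lemma ibp_x (f g fx gx : ℝ × ℝ → ℝ)
    (hf : ContinuousOn f K) (hg : ContinuousOn g K)
    (hfx : ContinuousOn fx K) (hgx : ContinuousOn gx K)
    (hdf : ∀ p ∈ Q, HasDerivAt (fun s => f (s, p.2)) (fx p) p.1)
    (hdg : ∀ p ∈ Q, HasDerivAt (fun s => g (s, p.2)) (gx p) p.1)
    (hb : ∀ y ∈ Ioo (0:ℝ) 1, f (0, y) * g (0, y) = 0 ∧ f (1, y) * g (1, y) = 0) :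
    ∫ p in Q, f p * gx p = -∫ p in Q, fx p * g p := by
  have hz : ∫ p in Q, (fx p * g p + f p * gx p) = 0 := by
    apply integral_px_zero (fun p => f p * g p) _ (hf.mul hg)
      ((hfx.mul hg).add (hf.mul hgx))
    · intro p hp
      exact (hdf p hp).mul (hdg p hp)
    · exact hb
  have hadd : ∫ p in Q, (fx p * g p + f p * gx p)
      = (∫ p in Q, fx p * g p) + ∫ p in Q, f p * gx p :=
    integral_add (integrableOn_of_contOn (hfx.mul hg)) (integrableOn_of_contOn (hf.mul hgx))
  linarith [hadd ▸ hz]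

lemma ibp_y (f g fy gy : ℝ × ℝ → ℝ)
    (hf : ContinuousOn f K) (hg : ContinuousOn g K)
    (hfy : ContinuousOn fy K) (hgy : ContinuousOn gy K)
    (hdf : ∀ p ∈ Q, HasDerivAt (fun s => f (p.1, s)) (fy p) p.2)
    (hdg : ∀ p ∈ Q, HasDerivAt (fun s => g (p.1, s)) (gy p) p.2)
    (hb : ∀ x ∈ Ioo (0:ℝ) 1, f (x, 0) * g (x, 0) = 0 ∧ f (x, 1) * g (x, 1) = 0) :
    ∫ p in Q, f p * gy p = -∫ p in Q, fy p * g p := by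
  have hz : ∫ p in Q, (fy p * g p + f p * gy p) = 0 := by
    apply integral_py_zero (fun p => f p * g p) _ (hf.mul hg)
      ((hfy.mul hg).add (hf.mul hgy))
    · intro p hp
      exact (hdf p hp).mul (hdg p hp)
    · exact hb
  have hadd : ∫ p in Q, (fy p * g p + f p * gy p)
      = (∫ p in Q, fy p * g p) + ∫ p in Q, f p * gy p :=
    integral_add (integrableOn_of_contOn (hfy.mul hg)) (integrableOn_of_contOn (hf.mul hgy))
  linarith [hadd ▸ hz]

lemma clairaut {f : ℝ × ℝ → ℝ} (hf : ContDiffOn ℝ 2 f K) {p : ℝ × ℝ} (hp : p ∈ Q) :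
    px (py f) p = py (px f) p := by
  have hQf : ∀ q ∈ Q, ContDiffAt ℝ 2 f q := fun q hq => hf.contDiffAt (mem_nhds_of_Q hq)
  set Φ : ℝ × ℝ → (ℝ × ℝ) →L[ℝ] ℝ := fderiv ℝ f with hΦdef
  have hΦdiff : DifferentiableAt ℝ Φ p := by
    have : ContDiffAt ℝ 1 Φ p := (hQf p hp).fderiv_right (by norm_num)
    exact this.differentiableAt (by norm_num)
  have hsymm : ∀ v w, (fderiv ℝ Φ p v) w = (fderiv ℝ Φ p w) v := by
    apply second_derivative_symmetric_of_eventually (f := f) (f' := Φ)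
    · filter_upwards [hQopen.mem_nhds hp] with q hq
      exact ((hQf q hq).differentiableAt (by norm_num)).hasFDerivAt
    · exact hΦdiff.hasFDerivAt
  have ev : ∀ w : ℝ × ℝ, (fun q => fderivWithin ℝ f K q w) =ᶠ[nhds p] (fun q => Φ q w) := by
    intro w
    filter_upwards [hQopen.mem_nhds hp] with q hq
    rw [fderivWithin_of_mem_nhds (mem_nhds_of_Q hq)]
  have hder : ∀ v w : ℝ × ℝ, fderivWithin ℝ (fun q => fderivWithin ℝ f K q w) K p v
      = (fderiv ℝ Φ p v) w := by
    intro v w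
    have h1 : HasFDerivAt (fun q => Φ q w)
        ((ContinuousLinearMap.apply ℝ ℝ w).comp (fderiv ℝ Φ p)) p :=
      (ContinuousLinearMap.apply ℝ ℝ w).hasFDerivAt.comp p hΦdiff.hasFDerivAt
    have h2 : HasFDerivAt (fun q => fderivWithin ℝ f K q w)
        ((ContinuousLinearMap.apply ℝ ℝ w).comp (fderiv ℝ Φ p)) p :=
      h1.congr_of_eventuallyEq (ev w)
    rw [fderivWithin_of_mem_nhds (mem_nhds_of_Q hp), h2.fderiv]
    rfl
  show fderivWithin ℝ (py f) K p (1,0) = fderivWithin ℝ (px f) K p (0,1)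
  have e1 : fderivWithin ℝ (py f) K p (1,0) = (fderiv ℝ Φ p (1,0)) (0,1) := hder (1,0) (0,1)
  have e2 : fderivWithin ℝ (px f) K p (0,1) = (fderiv ℝ Φ p (0,1)) (1,0) := hder (0,1) (1,0)
  rw [e1, e2, hsymm]

lemma cubeO_subset {T : ℝ} : cubeO T ⊆ cube T :=
  Set.prod_mono Ioo_subset_Icc_self (Set.prod_mono Ioo_subset_Icc_self Ioo_subset_Icc_self)
lemma cubeO_open {T : ℝ} : IsOpen (cubeO T) := isOpen_Ioo.prod (isOpen_Ioo.prod isOpen_Ioo)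
lemma cube_compact {T : ℝ} : IsCompact (cube T) :=
  isCompact_Icc.prod (isCompact_Icc.prod isCompact_Icc)
lemma cube_unique {T : ℝ} (hT : 0 < T) : UniqueDiffOn ℝ (cube T) :=
  (uniqueDiffOn_Icc one_pos).prod
    ((uniqueDiffOn_Icc one_pos).prod (uniqueDiffOn_Icc hT))
lemma cube_mem_nhds {T : ℝ} {r : ℝ × ℝ × ℝ} (hr : r ∈ cubeO T) : cube T ∈ nhds r :=
  Filter.mem_of_superset (cubeO_open.mem_nhds hr) cubeO_subset

lemma hasFDerivAt_of_cubeO {T : ℝ} {g : ℝ × ℝ × ℝ → ℝ} {n : WithTop ℕ∞}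
    (hg : ContDiffOn ℝ n g (cube T)) (hn : 1 ≤ n) {r : ℝ × ℝ × ℝ} (hr : r ∈ cubeO T) :
    HasFDerivAt g (fderivWithin ℝ g (cube T) r) r := by
  have h1 : ContDiffAt ℝ n g r := hg.contDiffAt (cube_mem_nhds hr)
  rw [fderivWithin_of_mem_nhds (cube_mem_nhds hr)]
  exact (h1.differentiableAt (lt_of_lt_of_le zero_lt_one hn).ne').hasFDerivAt

lemma slicet {T : ℝ} {g : ℝ × ℝ × ℝ → ℝ} {n : WithTop ℕ∞}
    (hg : ContDiffOn ℝ n g (cube T)) (hn : 1 ≤ n) {r : ℝ × ℝ × ℝ} (hr : r ∈ cubeO T) :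
    HasDerivAt (fun s => g (r.1, r.2.1, s)) (pt T g r) r.2.2 :=
  (hasFDerivAt_of_cubeO hg hn hr).comp_hasDerivAt r.2.2
    ((hasDerivAt_const r.2.2 r.1).prodMk ((hasDerivAt_const r.2.2 r.2.1).prodMk
      (hasDerivAt_id r.2.2)))

lemma contOn_pt {T : ℝ} (hT : 0 < T) {g : ℝ × ℝ × ℝ → ℝ} {n : WithTop ℕ∞}
    (hg : ContDiffOn ℝ n g (cube T)) (hn : 1 ≤ n) :
    ContinuousOn (pt T g) (cube T) :=
  ((hg.fderivWithin (cube_unique hT) (m := 0) (by simpa using hn)).continuousOn).clm_apply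
    continuousOn_const

lemma slice_contDiffOn {T : ℝ} {g : ℝ × ℝ × ℝ → ℝ} {n : WithTop ℕ∞}
    (hg : ContDiffOn ℝ n g (cube T)) {t : ℝ} (ht : t ∈ Icc 0 T) :
    ContDiffOn ℝ n (fun p : ℝ × ℝ => g (p.1, p.2, t)) K := by
  have hι : ContDiff ℝ n (fun p : ℝ × ℝ => (p.1, p.2, t)) := by fun_prop
  exact hg.comp hι.contDiffOn (fun p hp => ⟨hp.1, hp.2, ht⟩)

lemma hasDerivAt_sq_sum {f g : ℝ → ℝ} {x a b : ℝ} (hf : HasDerivAt f a x)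
    (hg : HasDerivAt g b x) :
    HasDerivAt (fun s => f s ^ 2 + g s ^ 2) (2 * f x * a + 2 * g x * b) x := by
  have h := (hf.mul hf).add (hg.mul hg)
  have h2 : HasDerivAt (fun s => f s * f s + g s * g s)
      (2 * f x * a + 2 * g x * b) x := by
    exact h.congr_deriv (by ring)
  have : (fun s => f s ^ 2 + g s ^ 2) = fun s => f s * f s + g s * g s := by
    funext s; ring
  rw [this]; exact h2

lemma energy_hasDerivAt {T : ℝ} (hT : 0 < T) (B1 B2 : ℝ → ℝ → ℝ → ℝ)
    (hB1 : ContDiffOn ℝ 2 (fun p : ℝ × ℝ × ℝ => B1 p.1 p.2.1 p.2.2) (cube T))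
    (hB2 : ContDiffOn ℝ 2 (fun p : ℝ × ℝ × ℝ => B2 p.1 p.2.1 p.2.2) (cube T))
    {t : ℝ} (ht : t ∈ Ioo 0 T) :
    HasDerivAt (fun s => ∫ q in Q, ((B1 q.1 q.2 s) ^ 2 + (B2 q.1 q.2 s) ^ 2))
      (∫ q in Q, (2 * B1 q.1 q.2 t * pt T (fun r => B1 r.1 r.2.1 r.2.2) (q.1, q.2, t)
        + 2 * B2 q.1 q.2 t * pt T (fun r => B2 r.1 r.2.1 r.2.2) (q.1, q.2, t))) t := by
  set Bu1 : ℝ × ℝ × ℝ → ℝ := fun r => B1 r.1 r.2.1 r.2.2 with hBu1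
  set Bu2 : ℝ × ℝ × ℝ → ℝ := fun r => B2 r.1 r.2.1 r.2.2 with hBu2
  set G : ℝ × ℝ × ℝ → ℝ :=
    fun r => 2 * Bu1 r * pt T Bu1 r + 2 * Bu2 r * pt T Bu2 r with hG
  have hGc : ContinuousOn G (cube T) :=
    ((continuousOn_const.mul (hB1.continuousOn)).mul
        (contOn_pt hT hB1 (by norm_num))).add
      ((continuousOn_const.mul (hB2.continuousOn)).mul (contOn_pt hT hB2 (by norm_num)))
  obtain ⟨C, hC⟩ := cube_compact.exists_bound_of_continuousOn hGc
  set δ : ℝ := min t (T - t) with hδ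
  have hδpos : 0 < δ := lt_min ht.1 (by linarith [ht.2])
  have hball : ∀ s ∈ Metric.ball t δ, s ∈ Ioo 0 T := by
    intro s hs
    rw [Metric.mem_ball, Real.dist_eq] at hs
    have h1 := (abs_lt.1 hs).1
    have h2 := (abs_lt.1 hs).2
    have hδt : δ ≤ t := min_le_left _ _
    have hδT : δ ≤ T - t := min_le_right _ _
    constructor <;> linarith
  have key := hasDerivAt_integral_of_dominated_loc_of_deriv_le (μ := volume.restrict Q)
    (F := fun s q => (B1 q.1 q.2 s) ^ 2 + (B2 q.1 q.2 s) ^ 2)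
    (F' := fun s (q : ℝ × ℝ) => G (q.1, q.2, s)) (x₀ := t)
    (bound := fun _ => C) (Metric.ball_mem_nhds t hδpos) ?_ ?_ ?_ ?_ ?_ ?_
  · exact key.2
  · filter_upwards [Ioo_mem_nhds ht.1 ht.2] with x hx
    have h1 : ContinuousOn (fun q : ℝ × ℝ => (B1 q.1 q.2 x) ^ 2 + (B2 q.1 q.2 x) ^ 2) K :=
      ((slice_contDiffOn hB1 (Ioo_subset_Icc_self hx)).continuousOn.pow 2).add
        ((slice_contDiffOn hB2 (Ioo_subset_Icc_self hx)).continuousOn.pow 2)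
    exact (h1.mono hQK).aestronglyMeasurable hQmeas
  · have h1 : ContinuousOn (fun q : ℝ × ℝ => (B1 q.1 q.2 t) ^ 2 + (B2 q.1 q.2 t) ^ 2) K :=
      ((slice_contDiffOn hB1 (Ioo_subset_Icc_self ht)).continuousOn.pow 2).add
        ((slice_contDiffOn hB2 (Ioo_subset_Icc_self ht)).continuousOn.pow 2)
    exact ((h1.integrableOn_compact hKcompact).mono_set hQK)
  · have h1 : ContinuousOn (fun q : ℝ × ℝ => G (q.1, q.2, t)) K := by
      apply hGc.comp (Continuous.continuousOn (by fun_prop))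
      intro p hp; exact ⟨hp.1, hp.2, Ioo_subset_Icc_self ht⟩
    exact (h1.mono hQK).aestronglyMeasurable hQmeas
  · refine (ae_restrict_iff' hQmeas).2 (Filter.Eventually.of_forall ?_)
    intro q hq x hx
    exact hC (q.1, q.2, x) ⟨Ioo_subset_Icc_self hq.1, Ioo_subset_Icc_self hq.2,
      Ioo_subset_Icc_self (hball x hx)⟩
  · exact integrableOn_const ((measure_mono hQK).trans_lt hKcompact.measure_lt_top).ne
  · refine (ae_restrict_iff' hQmeas).2 (Filter.Eventually.of_forall ?_)
    intro q hq x hx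
    have hr : ((q.1, q.2, x) : ℝ × ℝ × ℝ) ∈ cubeO T := ⟨hq.1, hq.2, hball x hx⟩
    have h1 : HasDerivAt (fun s => B1 q.1 q.2 s) (pt T Bu1 (q.1, q.2, x)) x :=
      slicet hB1 (by norm_num) hr
    have h2 : HasDerivAt (fun s => B2 q.1 q.2 s) (pt T Bu2 (q.1, q.2, x)) x :=
      slicet hB2 (by norm_num) hr
    have := hasDerivAt_sq_sum h1 h2
    convert this using 1

end IndObf

open IndObf Set

/-- Energy rate estimate for the resistive induction equation on the unit
square with homogeneous Dirichlet boundary conditions: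
`(d/dt)∫_Ω |B|² + 2ε ∫_Ω (∂_x B² − ∂_y B¹)² ≤ 2α ∫_Ω |B|²`. -/
theorem stmt0 (T ε α : ℝ) (hT : 0 < T) (hε : 0 < ε)
    (u1 u2 : ℝ → ℝ → ℝ) (B1 B2 : ℝ → ℝ → ℝ → ℝ)
    (hu1 : ContDiffOn ℝ 1 (fun p : ℝ × ℝ => u1 p.1 p.2) (Set.Icc 0 1 ×ˢ Set.Icc 0 1))
    (hu2 : ContDiffOn ℝ 1 (fun p : ℝ × ℝ => u2 p.1 p.2) (Set.Icc 0 1 ×ˢ Set.Icc 0 1))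
    (hB1 : ContDiffOn ℝ 2 (fun p : ℝ × ℝ × ℝ => B1 p.1 p.2.1 p.2.2)
      (Set.Icc 0 1 ×ˢ Set.Icc 0 1 ×ˢ Set.Icc 0 T))
    (hB2 : ContDiffOn ℝ 2 (fun p : ℝ × ℝ × ℝ => B2 p.1 p.2.1 p.2.2)
      (Set.Icc 0 1 ×ˢ Set.Icc 0 1 ×ˢ Set.Icc 0 T))
    (hα : ∀ x y : ℝ, x ∈ Set.Icc (0:ℝ) 1 → y ∈ Set.Icc (0:ℝ) 1 → ∀ ξ1 ξ2 : ℝ,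
      2 * (-(pdy2 u2 x y) * ξ1 ^ 2 + pdy2 u1 x y * ξ1 * ξ2 + pdx2 u2 x y * ξ1 * ξ2
            - pdx2 u1 x y * ξ2 ^ 2)
        + (pdx2 u1 x y + pdy2 u2 x y) * (ξ1 ^ 2 + ξ2 ^ 2)
      ≤ 2 * α * (ξ1 ^ 2 + ξ2 ^ 2))
    (hpde1 : ∀ x y t : ℝ, x ∈ Set.Ioo (0:ℝ) 1 → y ∈ Set.Ioo (0:ℝ) 1 → t ∈ Set.Ioo 0 T →
      pdt B1 x y t + u1 x y * pdx B1 x y t + u2 x y * pdy B1 x y t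
        + pdy2 u2 x y * B1 x y t - pdy2 u1 x y * B2 x y t
      = ε * (pdy (pdy B1) x y t - pdx (pdy B2) x y t))
    (hpde2 : ∀ x y t : ℝ, x ∈ Set.Ioo (0:ℝ) 1 → y ∈ Set.Ioo (0:ℝ) 1 → t ∈ Set.Ioo 0 T →
      pdt B2 x y t + u1 x y * pdx B2 x y t + u2 x y * pdy B2 x y t
        - pdx2 u2 x y * B1 x y t + pdx2 u1 x y * B2 x y t
      = ε * (pdx (pdx B2) x y t - pdx (pdy B1) x y t))
    (hbc : ∀ x y t : ℝ, x ∈ Set.Icc (0:ℝ) 1 → y ∈ Set.Icc (0:ℝ) 1 → t ∈ Set.Icc 0 T →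
      (x = 0 ∨ x = 1 ∨ y = 0 ∨ y = 1) → B1 x y t = 0 ∧ B2 x y t = 0) :
    ∀ t ∈ Set.Ioo 0 T,
      deriv (fun s => ∫ q in Set.Ioo (0:ℝ) 1 ×ˢ Set.Ioo (0:ℝ) 1,
          ((B1 q.1 q.2 s) ^ 2 + (B2 q.1 q.2 s) ^ 2)) t
        + 2 * ε * ∫ q in Set.Ioo (0:ℝ) 1 ×ˢ Set.Ioo (0:ℝ) 1,
            (pdx B2 q.1 q.2 t - pdy B1 q.1 q.2 t) ^ 2
      ≤ 2 * α * ∫ q in Set.Ioo (0:ℝ) 1 ×ˢ Set.Ioo (0:ℝ) 1,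
            ((B1 q.1 q.2 t) ^ 2 + (B2 q.1 q.2 t) ^ 2) := by
  intro t ht
  rw [show (Set.Ioo (0:ℝ) 1 ×ˢ Set.Ioo (0:ℝ) 1) = Q from rfl]
  have htI : t ∈ Set.Icc 0 T := Set.Ioo_subset_Icc_self ht
  have hb1 : ContDiffOn ℝ 2 (sl B1 t) K := slice_contDiffOn hB1 htI
  have hb2 : ContDiffOn ℝ 2 (sl B2 t) K := slice_contDiffOn hB2 htI
  have hU1 : ContDiffOn ℝ 1 (sl2 u1) K := hu1
  have hU2 : ContDiffOn ℝ 1 (sl2 u2) K := hu2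
  have hcb1 : ContinuousOn (sl B1 t) K := hb1.continuousOn
  have hcb2 : ContinuousOn (sl B2 t) K := hb2.continuousOn
  have hcU1 : ContinuousOn (sl2 u1) K := hU1.continuousOn
  have hcU2 : ContinuousOn (sl2 u2) K := hU2.continuousOn
  have hc1x : ContinuousOn (px (sl B1 t)) K := contOn_px hb1 (by norm_num)
  have hc1y : ContinuousOn (py (sl B1 t)) K := contOn_py hb1 (by norm_num)
  have hc2x : ContinuousOn (px (sl B2 t)) K := contOn_px hb2 (by norm_num)
  have hc2y : ContinuousOn (py (sl B2 t)) K := contOn_py hb2 (by norm_num)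
  have hcV1x : ContinuousOn (px (sl2 u1)) K := contOn_px hU1 le_rfl
  have hcV1y : ContinuousOn (py (sl2 u1)) K := contOn_py hU1 le_rfl
  have hcV2x : ContinuousOn (px (sl2 u2)) K := contOn_px hU2 le_rfl
  have hcV2y : ContinuousOn (py (sl2 u2)) K := contOn_py hU2 le_rfl
  have hd1x : ContDiffOn ℝ 1 (px (sl B1 t)) K := contDiffOn_px hb1
  have hd1y : ContDiffOn ℝ 1 (py (sl B1 t)) K := contDiffOn_py hb1
  have hd2x : ContDiffOn ℝ 1 (px (sl B2 t)) K := contDiffOn_px hb2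
  have hd2y : ContDiffOn ℝ 1 (py (sl B2 t)) K := contDiffOn_py hb2
  have hcPYW : ContinuousOn (fun p => py (px (sl B2 t)) p - py (py (sl B1 t)) p) K :=
    (contOn_py hd2x le_rfl).sub (contOn_py hd1y le_rfl)
  have hcPXW : ContinuousOn (fun p => px (px (sl B2 t)) p - px (py (sl B1 t)) p) K :=
    (contOn_px hd2x le_rfl).sub (contOn_px hd1y le_rfl)
  have hcW : ContinuousOn (fun p : ℝ × ℝ => px (sl B2 t) p - py (sl B1 t) p) K := hc2x.sub hc1y
  have hcphi : ContinuousOn (fun p : ℝ × ℝ => ((B1 p.1 p.2 t) ^ 2 + (B2 p.1 p.2 t) ^ 2)) K := (hcb1.pow 2).add (hcb2.pow 2)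
  -- boundary values
  have hbx0 : ∀ y ∈ Set.Ioo (0:ℝ) 1, B1 0 y t = 0 ∧ B2 0 y t = 0 := fun y hy =>
    hbc 0 y t ⟨le_refl 0, zero_le_one⟩ (Set.Ioo_subset_Icc_self hy) htI (Or.inl rfl)
  have hbx1 : ∀ y ∈ Set.Ioo (0:ℝ) 1, B1 1 y t = 0 ∧ B2 1 y t = 0 := fun y hy =>
    hbc 1 y t ⟨zero_le_one, le_refl 1⟩ (Set.Ioo_subset_Icc_self hy) htI (Or.inr (Or.inl rfl))
  have hby0 : ∀ x ∈ Set.Ioo (0:ℝ) 1, B1 x 0 t = 0 ∧ B2 x 0 t = 0 := fun x hx =>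
    hbc x 0 t (Set.Ioo_subset_Icc_self hx) ⟨le_refl 0, zero_le_one⟩ htI
      (Or.inr (Or.inr (Or.inl rfl)))
  have hby1 : ∀ x ∈ Set.Ioo (0:ℝ) 1, B1 x 1 t = 0 ∧ B2 x 1 t = 0 := fun x hx =>
    hbc x 1 t (Set.Ioo_subset_Icc_self hx) ⟨zero_le_one, le_refl 1⟩ htI
      (Or.inr (Or.inr (Or.inr rfl)))
  -- first-derivative identifications
  have e1x : ∀ p ∈ Q, deriv (fun s => B1 s p.2 t) p.1 = px (sl B1 t) p := fun p hp =>
    (slicex hb1 (by norm_num) hp).deriv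
  have e1y : ∀ p ∈ Q, deriv (fun s => B1 p.1 s t) p.2 = py (sl B1 t) p := fun p hp =>
    (slicey hb1 (by norm_num) hp).deriv
  have e2x : ∀ p ∈ Q, deriv (fun s => B2 s p.2 t) p.1 = px (sl B2 t) p := fun p hp =>
    (slicex hb2 (by norm_num) hp).deriv
  have e2y : ∀ p ∈ Q, deriv (fun s => B2 p.1 s t) p.2 = py (sl B2 t) p := fun p hp =>
    (slicey hb2 (by norm_num) hp).deriv
  have eu1x : ∀ p ∈ Q, deriv (fun s => u1 s p.2) p.1 = px (sl2 u1) p := fun p hp =>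
    (slicex hU1 le_rfl hp).deriv
  have eu1y : ∀ p ∈ Q, deriv (fun s => u1 p.1 s) p.2 = py (sl2 u1) p := fun p hp =>
    (slicey hU1 le_rfl hp).deriv
  have eu2x : ∀ p ∈ Q, deriv (fun s => u2 s p.2) p.1 = px (sl2 u2) p := fun p hp =>
    (slicex hU2 le_rfl hp).deriv
  have eu2y : ∀ p ∈ Q, deriv (fun s => u2 p.1 s) p.2 = py (sl2 u2) p := fun p hp =>
    (slicey hU2 le_rfl hp).deriv
  have ept1 : ∀ p ∈ Q, pt T (fun r => B1 r.1 r.2.1 r.2.2) (p.1, p.2, t) = deriv (fun s => B1 p.1 p.2 s) t := fun p hp =>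
    ((slicet hB1 (by norm_num)
      (show ((p.1, p.2, t) : ℝ × ℝ × ℝ) ∈ cubeO T from ⟨hp.1, hp.2, ht⟩)).deriv).symm
  have ept2 : ∀ p ∈ Q, pt T (fun r => B2 r.1 r.2.1 r.2.2) (p.1, p.2, t) = deriv (fun s => B2 p.1 p.2 s) t := fun p hp =>
    ((slicet hB2 (by norm_num)
      (show ((p.1, p.2, t) : ℝ × ℝ × ℝ) ∈ cubeO T from ⟨hp.1, hp.2, ht⟩)).deriv).symm
  -- second-derivative identifications
  have e1yy : ∀ p ∈ Q, deriv (fun s => deriv (fun z => B1 p.1 z t) s) p.2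
      = py (py (sl B1 t)) p := by
    intro p hp
    have ev : (fun s => deriv (fun z => B1 p.1 z t) s)
        =ᶠ[nhds p.2] (fun s => py (sl B1 t) (p.1, s)) := by
      filter_upwards [Ioo_mem_nhds hp.2.1 hp.2.2] with s hs
      exact (slicey hb1 (by norm_num) (show ((p.1, s) : ℝ × ℝ) ∈ Q from ⟨hp.1, hs⟩)).deriv
    rw [ev.deriv_eq]
    exact (slicey hd1y le_rfl hp).deriv
  have e2yx : ∀ p ∈ Q, deriv (fun s => deriv (fun z => B2 s z t) p.2) p.1
      = py (px (sl B2 t)) p := by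
    intro p hp
    have ev : (fun s => deriv (fun z => B2 s z t) p.2)
        =ᶠ[nhds p.1] (fun s => py (sl B2 t) (s, p.2)) := by
      filter_upwards [Ioo_mem_nhds hp.1.1 hp.1.2] with s hs
      exact (slicey hb2 (by norm_num) (show ((s, p.2) : ℝ × ℝ) ∈ Q from ⟨hs, hp.2⟩)).deriv
    rw [ev.deriv_eq, ← clairaut hb2 hp]
    exact (slicex hd2y le_rfl hp).deriv
  have e1yx : ∀ p ∈ Q, deriv (fun s => deriv (fun z => B1 s z t) p.2) p.1
      = px (py (sl B1 t)) p := by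
    intro p hp
    have ev : (fun s => deriv (fun z => B1 s z t) p.2)
        =ᶠ[nhds p.1] (fun s => py (sl B1 t) (s, p.2)) := by
      filter_upwards [Ioo_mem_nhds hp.1.1 hp.1.2] with s hs
      exact (slicey hb1 (by norm_num) (show ((s, p.2) : ℝ × ℝ) ∈ Q from ⟨hs, hp.2⟩)).deriv
    rw [ev.deriv_eq]
    exact (slicex hd1y le_rfl hp).deriv
  have e2xx : ∀ p ∈ Q, deriv (fun s => deriv (fun z => B2 z p.2 t) s) p.1
      = px (px (sl B2 t)) p := by
    intro p hp
    have ev : (fun s => deriv (fun z => B2 z p.2 t) s)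
        =ᶠ[nhds p.1] (fun s => px (sl B2 t) (s, p.2)) := by
      filter_upwards [Ioo_mem_nhds hp.1.1 hp.1.2] with s hs
      exact (slicex hb2 (by norm_num) (show ((s, p.2) : ℝ × ℝ) ∈ Q from ⟨hs, hp.2⟩)).deriv
    rw [ev.deriv_eq]
    exact (slicex hd2x le_rfl hp).deriv
  -- pointwise identity
  have hptw : ∀ p ∈ Q, (2 * B1 p.1 p.2 t * pt T (fun r => B1 r.1 r.2.1 r.2.2) (p.1, p.2, t) + 2 * B2 p.1 p.2 t * pt T (fun r => B2 r.1 r.2.1 r.2.2) (p.1, p.2, t))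
      = (-(u1 p.1 p.2 * (2 * B1 p.1 p.2 t * px (sl B1 t) p + 2 * B2 p.1 p.2 t * px (sl B2 t) p) + u2 p.1 p.2 * (2 * B1 p.1 p.2 t * py (sl B1 t) p + 2 * B2 p.1 p.2 t * py (sl B2 t) p))) + ((-2) * (py (sl2 u2) p * (B1 p.1 p.2 t) ^ 2 - py (sl2 u1) p * B1 p.1 p.2 t * B2 p.1 p.2 t - px (sl2 u2) p * B1 p.1 p.2 t * B2 p.1 p.2 t + px (sl2 u1) p * (B2 p.1 p.2 t) ^ 2)) + 2 * ε * (-(B1 p.1 p.2 t * (py (px (sl B2 t)) p - py (py (sl B1 t)) p)) + B2 p.1 p.2 t * (px (px (sl B2 t)) p - px (py (sl B1 t)) p)) := by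
    intro p hp
    have h1 := hpde1 p.1 p.2 t hp.1 hp.2 ht
    have h2 := hpde2 p.1 p.2 t hp.1 hp.2 ht
    simp only [pdt, pdx, pdy, pdx2, pdy2] at h1 h2
    rw [e1x p hp, e1y p hp, eu2y p hp, eu1y p hp, e1yy p hp, e2yx p hp] at h1
    rw [e2x p hp, e2y p hp, eu2x p hp, eu1x p hp, e2xx p hp, e1yx p hp] at h2
    rw [ept1 p hp, ept2 p hp]
    linear_combination 2 * B1 p.1 p.2 t * h1 + 2 * B2 p.1 p.2 t * h2
  -- energy derivative
  have hE := energy_hasDerivAt hT B1 B2 hB1 hB2 ht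
  have hder : deriv (fun s => ∫ q in Q, ((B1 q.1 q.2 s) ^ 2 + (B2 q.1 q.2 s) ^ 2)) t
      = ∫ q in Q, (2 * B1 q.1 q.2 t * pt T (fun r => B1 r.1 r.2.1 r.2.2) (q.1, q.2, t) + 2 * B2 q.1 q.2 t * pt T (fun r => B2 r.1 r.2.1 r.2.2) (q.1, q.2, t)) := hE.deriv
  -- integrability
  have hcphix : ContinuousOn (fun p : ℝ × ℝ => (2 * B1 p.1 p.2 t * px (sl B1 t) p + 2 * B2 p.1 p.2 t * px (sl B2 t) p)) K :=
    ((continuousOn_const.mul hcb1).mul hc1x).add ((continuousOn_const.mul hcb2).mul hc2x)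
  have hcphiy : ContinuousOn (fun p : ℝ × ℝ => (2 * B1 p.1 p.2 t * py (sl B1 t) p + 2 * B2 p.1 p.2 t * py (sl B2 t) p)) K :=
    ((continuousOn_const.mul hcb1).mul hc1y).add ((continuousOn_const.mul hcb2).mul hc2y)
  have hcC : ContinuousOn (fun p : ℝ × ℝ => ((-2) * (py (sl2 u2) p * (B1 p.1 p.2 t) ^ 2 - py (sl2 u1) p * B1 p.1 p.2 t * B2 p.1 p.2 t - px (sl2 u2) p * B1 p.1 p.2 t * B2 p.1 p.2 t + px (sl2 u1) p * (B2 p.1 p.2 t) ^ 2))) K :=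
    continuousOn_const.mul
      ((((hcV2y.mul (hcb1.pow 2)).sub ((hcV1y.mul hcb1).mul hcb2)).sub
        ((hcV2x.mul hcb1).mul hcb2)).add (hcV1x.mul (hcb2.pow 2)))
  have hcA : ContinuousOn (fun p : ℝ × ℝ => (-(u1 p.1 p.2 * (2 * B1 p.1 p.2 t * px (sl B1 t) p + 2 * B2 p.1 p.2 t * px (sl B2 t) p) + u2 p.1 p.2 * (2 * B1 p.1 p.2 t * py (sl B1 t) p + 2 * B2 p.1 p.2 t * py (sl B2 t) p)))) K :=
    ((hcU1.mul hcphix).add (hcU2.mul hcphiy)).neg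
  have hcD : ContinuousOn (fun p : ℝ × ℝ => (-(B1 p.1 p.2 t * (py (px (sl B2 t)) p - py (py (sl B1 t)) p)) + B2 p.1 p.2 t * (px (px (sl B2 t)) p - px (py (sl B1 t)) p))) K :=
    ((hcb1.mul hcPYW).neg).add (hcb2.mul hcPXW)
  have intA1 : IntegrableOn (fun p : ℝ × ℝ => u1 p.1 p.2 * (2 * B1 p.1 p.2 t * px (sl B1 t) p + 2 * B2 p.1 p.2 t * px (sl B2 t) p)) Q :=
    integrableOn_of_contOn (hcU1.mul hcphix)
  have intA2 : IntegrableOn (fun p : ℝ × ℝ => u2 p.1 p.2 * (2 * B1 p.1 p.2 t * py (sl B1 t) p + 2 * B2 p.1 p.2 t * py (sl B2 t) p)) Q :=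
    integrableOn_of_contOn (hcU2.mul hcphiy)
  have intC : IntegrableOn (fun p : ℝ × ℝ => ((-2) * (py (sl2 u2) p * (B1 p.1 p.2 t) ^ 2 - py (sl2 u1) p * B1 p.1 p.2 t * B2 p.1 p.2 t - px (sl2 u2) p * B1 p.1 p.2 t * B2 p.1 p.2 t + px (sl2 u1) p * (B2 p.1 p.2 t) ^ 2))) Q := integrableOn_of_contOn hcC
  have intA : IntegrableOn (fun p : ℝ × ℝ => (-(u1 p.1 p.2 * (2 * B1 p.1 p.2 t * px (sl B1 t) p + 2 * B2 p.1 p.2 t * px (sl B2 t) p) + u2 p.1 p.2 * (2 * B1 p.1 p.2 t * py (sl B1 t) p + 2 * B2 p.1 p.2 t * py (sl B2 t) p)))) Q := integrableOn_of_contOn hcA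
  have intAC : IntegrableOn (fun p : ℝ × ℝ => (-(u1 p.1 p.2 * (2 * B1 p.1 p.2 t * px (sl B1 t) p + 2 * B2 p.1 p.2 t * px (sl B2 t) p) + u2 p.1 p.2 * (2 * B1 p.1 p.2 t * py (sl B1 t) p + 2 * B2 p.1 p.2 t * py (sl B2 t) p))) + ((-2) * (py (sl2 u2) p * (B1 p.1 p.2 t) ^ 2 - py (sl2 u1) p * B1 p.1 p.2 t * B2 p.1 p.2 t - px (sl2 u2) p * B1 p.1 p.2 t * B2 p.1 p.2 t + px (sl2 u1) p * (B2 p.1 p.2 t) ^ 2))) Q :=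
    integrableOn_of_contOn (hcA.add hcC)
  have int2eD : IntegrableOn (fun p : ℝ × ℝ => 2 * ε * (-(B1 p.1 p.2 t * (py (px (sl B2 t)) p - py (py (sl B1 t)) p)) + B2 p.1 p.2 t * (px (px (sl B2 t)) p - px (py (sl B1 t)) p))) Q :=
    integrableOn_of_contOn (continuousOn_const.mul hcD)
  have intD1 : IntegrableOn (fun p : ℝ × ℝ => B1 p.1 p.2 t * (py (px (sl B2 t)) p - py (py (sl B1 t)) p)) Q :=
    integrableOn_of_contOn (hcb1.mul hcPYW)
  have intD1neg : IntegrableOn (fun p : ℝ × ℝ => -(B1 p.1 p.2 t * (py (px (sl B2 t)) p - py (py (sl B1 t)) p))) Q :=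
    integrableOn_of_contOn ((hcb1.mul hcPYW).neg)
  have intD2 : IntegrableOn (fun p : ℝ × ℝ => B2 p.1 p.2 t * (px (px (sl B2 t)) p - px (py (sl B1 t)) p)) Q :=
    integrableOn_of_contOn (hcb2.mul hcPXW)
  have intV1 : IntegrableOn (fun p : ℝ × ℝ => px (sl2 u1) p * ((B1 p.1 p.2 t) ^ 2 + (B2 p.1 p.2 t) ^ 2)) Q :=
    integrableOn_of_contOn (hcV1x.mul hcphi)
  have intV2 : IntegrableOn (fun p : ℝ × ℝ => py (sl2 u2) p * ((B1 p.1 p.2 t) ^ 2 + (B2 p.1 p.2 t) ^ 2)) Q :=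
    integrableOn_of_contOn (hcV2y.mul hcphi)
  have intV12 : IntegrableOn (fun p : ℝ × ℝ => px (sl2 u1) p * ((B1 p.1 p.2 t) ^ 2 + (B2 p.1 p.2 t) ^ 2) + py (sl2 u2) p * ((B1 p.1 p.2 t) ^ 2 + (B2 p.1 p.2 t) ^ 2)) Q :=
    integrableOn_of_contOn ((hcV1x.mul hcphi).add (hcV2y.mul hcphi))
  have intWb1 : IntegrableOn (fun p : ℝ × ℝ => py (sl B1 t) p * (px (sl B2 t) p - py (sl B1 t) p)) Q :=
    integrableOn_of_contOn (hc1y.mul hcW)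
  have intWb2 : IntegrableOn (fun p : ℝ × ℝ => px (sl B2 t) p * (px (sl B2 t) p - py (sl B1 t) p)) Q :=
    integrableOn_of_contOn (hc2x.mul hcW)
  -- split the derivative integral
  have hsplit : ∫ q in Q, (2 * B1 q.1 q.2 t * pt T (fun r => B1 r.1 r.2.1 r.2.2) (q.1, q.2, t) + 2 * B2 q.1 q.2 t * pt T (fun r => B2 r.1 r.2.1 r.2.2) (q.1, q.2, t))
      = -((∫ p in Q, u1 p.1 p.2 * (2 * B1 p.1 p.2 t * px (sl B1 t) p + 2 * B2 p.1 p.2 t * px (sl B2 t) p)) + (∫ p in Q, u2 p.1 p.2 * (2 * B1 p.1 p.2 t * py (sl B1 t) p + 2 * B2 p.1 p.2 t * py (sl B2 t) p))) + (∫ p in Q, ((-2) * (py (sl2 u2) p * (B1 p.1 p.2 t) ^ 2 - py (sl2 u1) p * B1 p.1 p.2 t * B2 p.1 p.2 t - px (sl2 u2) p * B1 p.1 p.2 t * B2 p.1 p.2 t + px (sl2 u1) p * (B2 p.1 p.2 t) ^ 2))) + 2 * ε * ((-(∫ p in Q, B1 p.1 p.2 t * (py (px (sl B2 t)) p - py (py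 (sl B1 t)) p))) + (∫ p in Q, B2 p.1 p.2 t * (px (px (sl B2 t)) p - px (py (sl B1 t)) p))) := by
    calc ∫ q in Q, (2 * B1 q.1 q.2 t * pt T (fun r => B1 r.1 r.2.1 r.2.2) (q.1, q.2, t) + 2 * B2 q.1 q.2 t * pt T (fun r => B2 r.1 r.2.1 r.2.2) (q.1, q.2, t))
        = ∫ p in Q, ((-(u1 p.1 p.2 * (2 * B1 p.1 p.2 t * px (sl B1 t) p + 2 * B2 p.1 p.2 t * px (sl B2 t) p) + u2 p.1 p.2 * (2 * B1 p.1 p.2 t * py (sl B1 t) p + 2 * B2 p.1 p.2 t * py (sl B2 t) p))) + ((-2) * (py (sl2 u2) p * (B1 p.1 p.2 t) ^ 2 - py (sl2 u1) p * B1 p.1 p.2 t * B2 p.1 p.2 t - px (sl2 u2) p * B1 p.1 p.2 t * B2 p.1 p.2 t + px (sl2 u1) p * (B2 p.1 p.2 t) ^ 2)) + 2 * ε * (-(B1 p.1 p.2 t * (py (px (sl B2 t)) p - py (py (sl B1 t)) p)) + B2 p.1 p.2 t * (px (px (sl B2 t)) p - px (py (sl B1 t)) p))) :=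
          setIntegral_congr_fun hQmeas (fun p hp => hptw p hp)
      _ = (∫ p in Q, ((-(u1 p.1 p.2 * (2 * B1 p.1 p.2 t * px (sl B1 t) p + 2 * B2 p.1 p.2 t * px (sl B2 t) p) + u2 p.1 p.2 * (2 * B1 p.1 p.2 t * py (sl B1 t) p + 2 * B2 p.1 p.2 t * py (sl B2 t) p))) + ((-2) * (py (sl2 u2) p * (B1 p.1 p.2 t) ^ 2 - py (sl2 u1) p * B1 p.1 p.2 t * B2 p.1 p.2 t - px (sl2 u2) p * B1 p.1 p.2 t * B2 p.1 p.2 t + px (sl2 u1) p * (B2 p.1 p.2 t) ^ 2)))) + ∫ p in Q, 2 * ε * (-(B1 p.1 p.2 t * (py (px (sl B2 t)) p - py (py (sl B1 t)) p)) + B2 p.1 p.2 t * (px (px (sl B2 t)) p - px (py (sl B1 t)) p)) := by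
          exact integral_add intAC int2eD
      _ = ((∫ p in Q, (-(u1 p.1 p.2 * (2 * B1 p.1 p.2 t * px (sl B1 t) p + 2 * B2 p.1 p.2 t * px (sl B2 t) p) + u2 p.1 p.2 * (2 * B1 p.1 p.2 t * py (sl B1 t) p + 2 * B2 p.1 p.2 t * py (sl B2 t) p)))) + (∫ p in Q, ((-2) * (py (sl2 u2) p * (B1 p.1 p.2 t) ^ 2 - py (sl2 u1) p * B1 p.1 p.2 t * B2 p.1 p.2 t - px (sl2 u2) p * B1 p.1 p.2 t * B2 p.1 p.2 t + px (sl2 u1) p * (B2 p.1 p.2 t) ^ 2)))) + ∫ p in Q, 2 * ε * (-(B1 p.1 p.2 t * (py (px (sl B2 t)) p - py (py (sl B1 t)) p)) + B2 p.1 p.2 t * (px (px (sl B2 t)) p - px (py (sl B1 t)) p)) := by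
          rw [integral_add intA intC]
      _ = ((∫ p in Q, (-(u1 p.1 p.2 * (2 * B1 p.1 p.2 t * px (sl B1 t) p + 2 * B2 p.1 p.2 t * px (sl B2 t) p) + u2 p.1 p.2 * (2 * B1 p.1 p.2 t * py (sl B1 t) p + 2 * B2 p.1 p.2 t * py (sl B2 t) p)))) + (∫ p in Q, ((-2) * (py (sl2 u2) p * (B1 p.1 p.2 t) ^ 2 - py (sl2 u1) p * B1 p.1 p.2 t * B2 p.1 p.2 t - px (sl2 u2) p * B1 p.1 p.2 t * B2 p.1 p.2 t + px (sl2 u1) p * (B2 p.1 p.2 t) ^ 2)))) + 2 * ε * ∫ p in Q, (-(B1 p.1 p.2 t * (py (px (sl B2 t)) p - py (py (sl B1 t)) p)) + B2 p.1 p.2 t * (px (px (sl B2 t)) p - px (py (sl B1 t)) p)) := by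
          rw [show (∫ p in Q, 2 * ε * (-(B1 p.1 p.2 t * (py (px (sl B2 t)) p - py (py (sl B1 t)) p)) + B2 p.1 p.2 t * (px (px (sl B2 t)) p - px (py (sl B1 t)) p))) = 2 * ε * ∫ p in Q, (-(B1 p.1 p.2 t * (py (px (sl B2 t)) p - py (py (sl B1 t)) p)) + B2 p.1 p.2 t * (px (px (sl B2 t)) p - px (py (sl B1 t)) p)) from integral_const_mul _ _]
      _ = ((-((∫ p in Q, u1 p.1 p.2 * (2 * B1 p.1 p.2 t * px (sl B1 t) p + 2 * B2 p.1 p.2 t * px (sl B2 t) p)) + (∫ p in Q, u2 p.1 p.2 * (2 * B1 p.1 p.2 t * py (sl B1 t) p + 2 * B2 p.1 p.2 t * py (sl B2 t) p)))) + (∫ p in Q, ((-2) * (py (sl2 u2) p * (B1 p.1 p.2 t) ^ 2 - py (sl2 u1) p * B1 p.1 p.2 t * B2 p.1 p.2 t - px (sl2 u2) p * B1 p.1 p.2 t * B2 p.1 p.2 t + px (sl2 u1) p * (B2 p.1 p.2 t) ^ 2)))) + 2 * ε * ∫ p in Q, (-(B1 p.1 p.2 t * (py (px (sl B2 t)) p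 - py (py (sl B1 t)) p)) + B2 p.1 p.2 t * (px (px (sl B2 t)) p - px (py (sl B1 t)) p)) := by
          rw [integral_neg, integral_add intA1 intA2]
      _ = ((-((∫ p in Q, u1 p.1 p.2 * (2 * B1 p.1 p.2 t * px (sl B1 t) p + 2 * B2 p.1 p.2 t * px (sl B2 t) p)) + (∫ p in Q, u2 p.1 p.2 * (2 * B1 p.1 p.2 t * py (sl B1 t) p + 2 * B2 p.1 p.2 t * py (sl B2 t) p)))) + (∫ p in Q, ((-2) * (py (sl2 u2) p * (B1 p.1 p.2 t) ^ 2 - py (sl2 u1) p * B1 p.1 p.2 t * B2 p.1 p.2 t - px (sl2 u2) p * B1 p.1 p.2 t * B2 p.1 p.2 t + px (sl2 u1) p * (B2 p.1 p.2 t) ^ 2)))) + 2 * ε * ((-(∫ p in Q, B1 p.1 p.2 t * (py (px (sl B2 t)) p - py (py (sl B1 t)) p))) + (∫ p in Q, B2 p.1 p.2 t * (px (px (sl B2 t)) p - px (py (sl B1 t)) p))) := by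
          rw [integral_add intD1neg intD2, integral_neg]
      _ = -((∫ p in Q, u1 p.1 p.2 * (2 * B1 p.1 p.2 t * px (sl B1 t) p + 2 * B2 p.1 p.2 t * px (sl B2 t) p)) + (∫ p in Q, u2 p.1 p.2 * (2 * B1 p.1 p.2 t * py (sl B1 t) p + 2 * B2 p.1 p.2 t * py (sl B2 t) p))) + (∫ p in Q, ((-2) * (py (sl2 u2) p * (B1 p.1 p.2 t) ^ 2 - py (sl2 u1) p * B1 p.1 p.2 t * B2 p.1 p.2 t - px (sl2 u2) p * B1 p.1 p.2 t * B2 p.1 p.2 t + px (sl2 u1) p * (B2 p.1 p.2 t) ^ 2))) + 2 * ε * ((-(∫ p in Q, B1 p.1 p.2 t * (py (px (sl B2 t)) p - py (py (sl B1 t)) p))) + (∫ p in Q, B2 p.1 p.2 t * (px (px (sl B2 t)) p - px (py (sl B1 t)) p))) := by ring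
  -- integration by parts
  have hibpA1 : (∫ p in Q, u1 p.1 p.2 * (2 * B1 p.1 p.2 t * px (sl B1 t) p + 2 * B2 p.1 p.2 t * px (sl B2 t) p)) = -(∫ p in Q, px (sl2 u1) p * ((B1 p.1 p.2 t) ^ 2 + (B2 p.1 p.2 t) ^ 2)) := by
    apply ibp_x (sl2 u1) (fun p : ℝ × ℝ => ((B1 p.1 p.2 t) ^ 2 + (B2 p.1 p.2 t) ^ 2)) (px (sl2 u1)) (fun p : ℝ × ℝ => (2 * B1 p.1 p.2 t * px (sl B1 t) p + 2 * B2 p.1 p.2 t * px (sl B2 t) p))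
      hcU1 hcphi hcV1x hcphix
    · intro p hp; exact slicex hU1 le_rfl hp
    · intro p hp
      exact hasDerivAt_sq_sum (slicex hb1 (by norm_num) hp) (slicex hb2 (by norm_num) hp)
    · intro y hy
      constructor
      · show u1 0 y * ((B1 0 y t) ^ 2 + (B2 0 y t) ^ 2) = 0
        rw [(hbx0 y hy).1, (hbx0 y hy).2]; ring
      · show u1 1 y * ((B1 1 y t) ^ 2 + (B2 1 y t) ^ 2) = 0
        rw [(hbx1 y hy).1, (hbx1 y hy).2]; ring
  have hibpA2 : (∫ p in Q, u2 p.1 p.2 * (2 * B1 p.1 p.2 t * py (sl B1 t) p + 2 * B2 p.1 p.2 t * py (sl B2 t) p)) = -(∫ p in Q, py (sl2 u2) p * ((B1 p.1 p.2 t) ^ 2 + (B2 p.1 p.2 t) ^ 2)) := by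
    apply ibp_y (sl2 u2) (fun p : ℝ × ℝ => ((B1 p.1 p.2 t) ^ 2 + (B2 p.1 p.2 t) ^ 2)) (py (sl2 u2)) (fun p : ℝ × ℝ => (2 * B1 p.1 p.2 t * py (sl B1 t) p + 2 * B2 p.1 p.2 t * py (sl B2 t) p))
      hcU2 hcphi hcV2y hcphiy
    · intro p hp; exact slicey hU2 le_rfl hp
    · intro p hp
      exact hasDerivAt_sq_sum (slicey hb1 (by norm_num) hp) (slicey hb2 (by norm_num) hp)
    · intro x hx
      constructor
      · show u2 x 0 * ((B1 x 0 t) ^ 2 + (B2 x 0 t) ^ 2) = 0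
        rw [(hby0 x hx).1, (hby0 x hx).2]; ring
      · show u2 x 1 * ((B1 x 1 t) ^ 2 + (B2 x 1 t) ^ 2) = 0
        rw [(hby1 x hx).1, (hby1 x hx).2]; ring
  have hibpD1 : (∫ p in Q, B1 p.1 p.2 t * (py (px (sl B2 t)) p - py (py (sl B1 t)) p)) = -(∫ p in Q, py (sl B1 t) p * (px (sl B2 t) p - py (sl B1 t) p)) := by
    apply ibp_y (sl B1 t) (fun p : ℝ × ℝ => px (sl B2 t) p - py (sl B1 t) p) (py (sl B1 t))
      (fun p : ℝ × ℝ => py (px (sl B2 t)) p - py (py (sl B1 t)) p)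
      hcb1 hcW hc1y hcPYW
    · intro p hp; exact slicey hb1 (by norm_num) hp
    · intro p hp
      exact (slicey hd2x le_rfl hp).sub (slicey hd1y le_rfl hp)
    · intro x hx
      constructor
      · show B1 x 0 t * _ = 0
        rw [(hby0 x hx).1]; ring
      · show B1 x 1 t * _ = 0
        rw [(hby1 x hx).1]; ring
  have hibpD2 : (∫ p in Q, B2 p.1 p.2 t * (px (px (sl B2 t)) p - px (py (sl B1 t)) p)) = -(∫ p in Q, px (sl B2 t) p * (px (sl B2 t) p - py (sl B1 t) p)) := by
    apply ibp_x (sl B2 t) (fun p : ℝ × ℝ => px (sl B2 t) p - py (sl B1 t) p) (px (sl B2 t))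
      (fun p : ℝ × ℝ => px (px (sl B2 t)) p - px (py (sl B1 t)) p)
      hcb2 hcW hc2x hcPXW
    · intro p hp; exact slicex hb2 (by norm_num) hp
    · intro p hp
      exact (slicex hd2x le_rfl hp).sub (slicex hd1y le_rfl hp)
    · intro y hy
      constructor
      · show B2 0 y t * _ = 0
        rw [(hbx0 y hy).2]; ring
      · show B2 1 y t * _ = 0
        rw [(hbx1 y hy).2]; ring
  have hWdiff : (∫ p in Q, px (sl B2 t) p * (px (sl B2 t) p - py (sl B1 t) p)) - (∫ p in Q, py (sl B1 t) p * (px (sl B2 t) p - py (sl B1 t) p)) = (∫ p in Q, (px (sl B2 t) p - py (sl B1 t) p) ^ 2) := by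
    rw [← integral_sub intWb2 intWb1]
    exact setIntegral_congr_fun hQmeas (fun p hp => by ring)
  -- the coercivity bound
  have hmono : ∫ p in Q, (px (sl2 u1) p * ((B1 p.1 p.2 t) ^ 2 + (B2 p.1 p.2 t) ^ 2) + py (sl2 u2) p * ((B1 p.1 p.2 t) ^ 2 + (B2 p.1 p.2 t) ^ 2) + ((-2) * (py (sl2 u2) p * (B1 p.1 p.2 t) ^ 2 - py (sl2 u1) p * B1 p.1 p.2 t * B2 p.1 p.2 t - px (sl2 u2) p * B1 p.1 p.2 t * B2 p.1 p.2 t + px (sl2 u1) p * (B2 p.1 p.2 t) ^ 2)))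
      ≤ ∫ p in Q, 2 * α * ((B1 p.1 p.2 t) ^ 2 + (B2 p.1 p.2 t) ^ 2) := by
    apply setIntegral_mono_on
    · exact integrableOn_of_contOn (((hcV1x.mul hcphi).add (hcV2y.mul hcphi)).add hcC)
    · exact integrableOn_of_contOn (continuousOn_const.mul hcphi)
    · exact hQmeas
    · intro p hp
      have hab := hα p.1 p.2 (Set.Ioo_subset_Icc_self hp.1) (Set.Ioo_subset_Icc_self hp.2)
        (B1 p.1 p.2 t) (B2 p.1 p.2 t)
      simp only [pdx2, pdy2] at hab
      rw [eu1x p hp, eu1y p hp, eu2x p hp, eu2y p hp] at hab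
      linarith [hab]
  have hsum : ∫ p in Q, (px (sl2 u1) p * ((B1 p.1 p.2 t) ^ 2 + (B2 p.1 p.2 t) ^ 2) + py (sl2 u2) p * ((B1 p.1 p.2 t) ^ 2 + (B2 p.1 p.2 t) ^ 2) + ((-2) * (py (sl2 u2) p * (B1 p.1 p.2 t) ^ 2 - py (sl2 u1) p * B1 p.1 p.2 t * B2 p.1 p.2 t - px (sl2 u2) p * B1 p.1 p.2 t * B2 p.1 p.2 t + px (sl2 u1) p * (B2 p.1 p.2 t) ^ 2)))
      = (∫ p in Q, px (sl2 u1) p * ((B1 p.1 p.2 t) ^ 2 + (B2 p.1 p.2 t) ^ 2)) + (∫ p in Q, py (sl2 u2) p * ((B1 p.1 p.2 t) ^ 2 + (B2 p.1 p.2 t) ^ 2)) + (∫ p in Q, ((-2) * (py (sl2 u2) p * (B1 p.1 p.2 t) ^ 2 - py (sl2 u1) p * B1 p.1 p.2 t * B2 p.1 p.2 t - px (sl2 u2) p * B1 p.1 p.2 t * B2 p.1 p.2 t + px (sl2 u1) p * (B2 p.1 p.2 t) ^ 2))) := by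
    rw [integral_add intV12 intC, integral_add intV1 intV2]
  have hconst : ∫ p in Q, 2 * α * ((B1 p.1 p.2 t) ^ 2 + (B2 p.1 p.2 t) ^ 2) = 2 * α * (∫ p in Q, ((B1 p.1 p.2 t) ^ 2 + (B2 p.1 p.2 t) ^ 2)) := integral_const_mul _ _
  -- identify the statement integrals
  have hstmtw : (∫ q in Q, (pdx B2 q.1 q.2 t - pdy B1 q.1 q.2 t) ^ 2) = (∫ p in Q, (px (sl B2 t) p - py (sl B1 t) p) ^ 2) := by
    apply setIntegral_congr_fun hQmeas
    intro p hp
    simp only [pdx, pdy]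
    rw [e2x p hp, e1y p hp]
  -- conclusion
  have hmono' : (∫ p in Q, px (sl2 u1) p * ((B1 p.1 p.2 t) ^ 2 + (B2 p.1 p.2 t) ^ 2)) + (∫ p in Q, py (sl2 u2) p * ((B1 p.1 p.2 t) ^ 2 + (B2 p.1 p.2 t) ^ 2)) + (∫ p in Q, ((-2) * (py (sl2 u2) p * (B1 p.1 p.2 t) ^ 2 - py (sl2 u1) p * B1 p.1 p.2 t * B2 p.1 p.2 t - px (sl2 u2) p * B1 p.1 p.2 t * B2 p.1 p.2 t + px (sl2 u1) p * (B2 p.1 p.2 t) ^ 2))) ≤ 2 * α * (∫ p in Q, ((B1 p.1 p.2 t) ^ 2 + (B2 p.1 p.2 t) ^ 2)) := by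
    rw [← hsum, ← hconst]; exact hmono
  rw [hder, hstmtw, hsplit, hibpA1, hibpA2, hibpD1, hibpD2]
  have hIW : (∫ p in Q, ((B1 p.1 p.2 t) ^ 2 + (B2 p.1 p.2 t) ^ 2)) = ∫ q in Q, ((B1 q.1 q.2 t) ^ 2 + (B2 q.1 q.2 t) ^ 2) := rfl
  rw [← hIW]
  nlinarith [hWdiff, hmono', sq_nonneg ε]
end

section
/- Let B solve the resistive induction equation on Ω×(0,T) and satisfy the homogeneous Dirichlet boundary condition B(x,y,t) = 0 for all (x,y) ∈ ∂Ω and all t ∈ [0,T]. Then for every t ∈ [0,T]: ∫_Ω ((B¹(·,t))² + (B²(·,t))²) dx dy + 2ε ∫₀ᵗ e^{2α(t−s)} ∫_Ω (∂_x B²(·,s) − ∂_y B¹(·,s))² dx dy ds ≤ e^{2αt} ∫_Ω ((B¹(·,0))² + (B²(·,0))²) dx dy. -/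
open MeasureTheory

noncomputable section

/-- The closed space-time box. -/
def KK (T : ℝ) : Set (ℝ × ℝ × ℝ) := Set.Icc 0 1 ×ˢ Set.Icc 0 1 ×ˢ Set.Icc 0 T

lemma KK_eq (T : ℝ) : KK T = Set.Icc (0,0,0) (1,1,T) := by
  rw [KK, ← Set.Icc_prod_Icc, ← Set.Icc_prod_Icc]

lemma uniqueDiffOn_KK {T : ℝ} (hT : 0 < T) : UniqueDiffOn ℝ (KK T) := by
  apply UniqueDiffOn.prod (uniqueDiffOn_Icc one_pos)
  exact UniqueDiffOn.prod (uniqueDiffOn_Icc one_pos) (uniqueDiffOn_Icc hT)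

lemma mem_KK {T x y t : ℝ} (hx : x ∈ Set.Icc (0:ℝ) 1) (hy : y ∈ Set.Icc (0:ℝ) 1)
    (ht : t ∈ Set.Icc 0 T) : (x, y, t) ∈ KK T := ⟨hx, hy, ht⟩

lemma interior_KK {T : ℝ} :
    interior (KK T) = Set.Ioo 0 1 ×ˢ Set.Ioo 0 1 ×ˢ Set.Ioo 0 T := by
  rw [KK, interior_prod_eq, interior_prod_eq, interior_Icc, interior_Icc]

variable {E : Type*} [NormedAddCommGroup E] [NormedSpace ℝ E]

/-- x-line derivative from differentiability on the box. -/
lemma lineX {T : ℝ} {f : ℝ × ℝ × ℝ → E} (hf : DifferentiableOn ℝ f (KK T))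
    {x y t : ℝ} (hx : x ∈ Set.Ioo (0:ℝ) 1) (hy : y ∈ Set.Icc (0:ℝ) 1)
    (ht : t ∈ Set.Icc 0 T) :
    HasDerivAt (fun s => f (s, y, t)) (fderivWithin ℝ f (KK T) (x, y, t) (1, 0, 0)) x := by
  have hp : (x, y, t) ∈ KK T := mem_KK (Set.mem_Icc_of_Ioo hx) hy ht
  have hF : HasFDerivWithinAt f (fderivWithin ℝ f (KK T) (x, y, t)) (KK T) (x, y, t) :=
    (hf _ hp).hasFDerivWithinAt
  have hγ : HasDerivWithinAt (fun s : ℝ => (s, y, t)) ((1:ℝ), (0:ℝ), (0:ℝ)) (Set.Icc 0 1) x := by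
    exact ((hasDerivAt_id x).prodMk (hasDerivAt_const x (y, t))).hasDerivWithinAt
  have hmap : Set.MapsTo (fun s : ℝ => (s, y, t)) (Set.Icc 0 1) (KK T) :=
    fun s hs => mem_KK hs hy ht
  have := hF.comp_hasDerivWithinAt x hγ hmap
  exact this.hasDerivAt (Icc_mem_nhds hx.1 hx.2)

lemma lineY {T : ℝ} {f : ℝ × ℝ × ℝ → E} (hf : DifferentiableOn ℝ f (KK T))
    {x y t : ℝ} (hx : x ∈ Set.Icc (0:ℝ) 1) (hy : y ∈ Set.Ioo (0:ℝ) 1)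
    (ht : t ∈ Set.Icc 0 T) :
    HasDerivAt (fun s => f (x, s, t)) (fderivWithin ℝ f (KK T) (x, y, t) (0, 1, 0)) y := by
  have hp : (x, y, t) ∈ KK T := mem_KK hx (Set.mem_Icc_of_Ioo hy) ht
  have hF : HasFDerivWithinAt f (fderivWithin ℝ f (KK T) (x, y, t)) (KK T) (x, y, t) :=
    (hf _ hp).hasFDerivWithinAt
  have hγ : HasDerivWithinAt (fun s : ℝ => (x, s, t)) ((0:ℝ), (1:ℝ), (0:ℝ)) (Set.Icc 0 1) y :=
    ((hasDerivAt_const y x).prodMk ((hasDerivAt_id y).prodMk (hasDerivAt_const y t))).hasDerivWithinAt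
  have hmap : Set.MapsTo (fun s : ℝ => (x, s, t)) (Set.Icc 0 1) (KK T) :=
    fun s hs => mem_KK hx hs ht
  have := hF.comp_hasDerivWithinAt y hγ hmap
  exact this.hasDerivAt (Icc_mem_nhds hy.1 hy.2)

lemma lineT {T : ℝ} {f : ℝ × ℝ × ℝ → E} (hf : DifferentiableOn ℝ f (KK T))
    {x y t : ℝ} (hx : x ∈ Set.Icc (0:ℝ) 1) (hy : y ∈ Set.Icc (0:ℝ) 1)
    (ht : t ∈ Set.Ioo 0 T) :
    HasDerivAt (fun s => f (x, y, s)) (fderivWithin ℝ f (KK T) (x, y, t) (0, 0, 1)) t := by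
  have hp : (x, y, t) ∈ KK T := mem_KK hx hy (Set.mem_Icc_of_Ioo ht)
  have hF : HasFDerivWithinAt f (fderivWithin ℝ f (KK T) (x, y, t)) (KK T) (x, y, t) :=
    (hf _ hp).hasFDerivWithinAt
  have hγ : HasDerivWithinAt (fun s : ℝ => (x, y, s)) ((0:ℝ), (0:ℝ), (1:ℝ)) (Set.Icc 0 T) t :=
    ((hasDerivAt_const t x).prodMk ((hasDerivAt_const t y).prodMk (hasDerivAt_id t))).hasDerivWithinAt
  have hmap : Set.MapsTo (fun s : ℝ => (x, y, s)) (Set.Icc 0 T) (KK T) :=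
    fun s hs => mem_KK hx hy hs
  have := hF.comp_hasDerivWithinAt t hγ hmap
  exact this.hasDerivAt (Icc_mem_nhds ht.1 ht.2)

end
noncomputable section
open Set

variable {T : ℝ}

section Field
variable {B : ℝ → ℝ → ℝ → ℝ}
  (hB : ContDiffOn ℝ 2 (fun p : ℝ × ℝ × ℝ => B p.1 p.2.1 p.2.2) (KK T))

/-- abbreviation for the function on the product space -/
private def FF (B : ℝ → ℝ → ℝ → ℝ) : ℝ × ℝ × ℝ → ℝ := fun p => B p.1 p.2.1 p.2.2
/-- first within-derivative -/
private def DF (T : ℝ) (B : ℝ → ℝ → ℝ → ℝ) : ℝ × ℝ × ℝ → ℝ × ℝ × ℝ →L[ℝ] ℝ :=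
  fderivWithin ℝ (FF B) (KK T)
/-- second within-derivative -/
private def D2F (T : ℝ) (B : ℝ → ℝ → ℝ → ℝ) : ℝ × ℝ × ℝ → ℝ × ℝ × ℝ →L[ℝ] ℝ × ℝ × ℝ →L[ℝ] ℝ :=
  fderivWithin ℝ (DF T B) (KK T)

include hB

lemma hDF (hT : 0 < T) : ContDiffOn ℝ 1 (DF T B) (KK T) :=
  hB.fderivWithin (uniqueDiffOn_KK hT) (by norm_num : (1:WithTop ℕ∞) + 1 ≤ 2)

lemma contDF (hT : 0 < T) : ContinuousOn (DF T B) (KK T) := (hDF hB hT).continuousOn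

lemma contD2F (hT : 0 < T) : ContinuousOn (D2F T B) (KK T) :=
  (hDF hB hT).continuousOn_fderivWithin (uniqueDiffOn_KK hT) le_rfl

lemma pdx_hasDeriv (hx : x ∈ Set.Ioo (0:ℝ) 1) (hy : y ∈ Set.Icc (0:ℝ) 1)
    (ht : t ∈ Set.Icc 0 T) :
    HasDerivAt (fun s => B s y t) (DF T B (x, y, t) (1, 0, 0)) x :=
  lineX (hB.differentiableOn (by norm_num)) hx hy ht

lemma pdx_eq (hx : x ∈ Set.Ioo (0:ℝ) 1) (hy : y ∈ Set.Icc (0:ℝ) 1)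
    (ht : t ∈ Set.Icc 0 T) : pdx B x y t = DF T B (x, y, t) (1, 0, 0) :=
  (pdx_hasDeriv hB hx hy ht).deriv

lemma pdy_hasDeriv (hx : x ∈ Set.Icc (0:ℝ) 1) (hy : y ∈ Set.Ioo (0:ℝ) 1)
    (ht : t ∈ Set.Icc 0 T) :
    HasDerivAt (fun s => B x s t) (DF T B (x, y, t) (0, 1, 0)) y :=
  lineY (hB.differentiableOn (by norm_num)) hx hy ht

lemma pdy_eq (hx : x ∈ Set.Icc (0:ℝ) 1) (hy : y ∈ Set.Ioo (0:ℝ) 1)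
    (ht : t ∈ Set.Icc 0 T) : pdy B x y t = DF T B (x, y, t) (0, 1, 0) :=
  (pdy_hasDeriv hB hx hy ht).deriv

lemma pdt_hasDeriv (hx : x ∈ Set.Icc (0:ℝ) 1) (hy : y ∈ Set.Icc (0:ℝ) 1)
    (ht : t ∈ Set.Ioo 0 T) :
    HasDerivAt (fun s => B x y s) (DF T B (x, y, t) (0, 0, 1)) t :=
  lineT (hB.differentiableOn (by norm_num)) hx hy ht

lemma pdt_eq (hx : x ∈ Set.Icc (0:ℝ) 1) (hy : y ∈ Set.Icc (0:ℝ) 1)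
    (ht : t ∈ Set.Ioo 0 T) : pdt B x y t = DF T B (x, y, t) (0, 0, 1) :=
  (pdt_hasDeriv hB hx hy ht).deriv

/-- x-derivative of `DF · v` -/
lemma DFapply_hasDerivX (hT : 0 < T) (v : ℝ × ℝ × ℝ) (hx : x ∈ Set.Ioo (0:ℝ) 1)
    (hy : y ∈ Set.Icc (0:ℝ) 1) (ht : t ∈ Set.Icc 0 T) :
    HasDerivAt (fun s => DF T B (s, y, t) v) (D2F T B (x, y, t) (1, 0, 0) v) x := by
  have h1 : HasDerivAt (fun s => DF T B (s, y, t)) (D2F T B (x, y, t) (1, 0, 0)) x :=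
    lineX ((hDF hB hT).differentiableOn one_ne_zero) hx hy ht
  exact ((ContinuousLinearMap.apply ℝ ℝ v).hasFDerivAt.comp_hasDerivAt x h1 :)

lemma DFapply_hasDerivY (hT : 0 < T) (v : ℝ × ℝ × ℝ) (hx : x ∈ Set.Icc (0:ℝ) 1)
    (hy : y ∈ Set.Ioo (0:ℝ) 1) (ht : t ∈ Set.Icc 0 T) :
    HasDerivAt (fun s => DF T B (x, s, t) v) (D2F T B (x, y, t) (0, 1, 0) v) y := by
  have h1 : HasDerivAt (fun s => DF T B (x, s, t)) (D2F T B (x, y, t) (0, 1, 0)) y :=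
    lineY ((hDF hB hT).differentiableOn one_ne_zero) hx hy ht
  exact ((ContinuousLinearMap.apply ℝ ℝ v).hasFDerivAt.comp_hasDerivAt y h1 :)

/-- `∂x ∂y B = D2F e1 e2` at spatially interior points. -/
lemma pdx_pdy_eq (hT : 0 < T) (hx : x ∈ Set.Ioo (0:ℝ) 1) (hy : y ∈ Set.Ioo (0:ℝ) 1)
    (ht : t ∈ Set.Icc 0 T) :
    pdx (pdy B) x y t = D2F T B (x, y, t) (1, 0, 0) (0, 1, 0) := by
  have h1 := DFapply_hasDerivX hB hT ((0:ℝ), (1:ℝ), (0:ℝ)) hx (Set.mem_Icc_of_Ioo hy) ht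
  have h2 : (fun s => pdy B s y t) =ᶠ[nhds x] (fun s => DF T B (s, y, t) (0, 1, 0)) := by
    filter_upwards [Ioo_mem_nhds hx.1 hx.2] with s hs
    exact pdy_eq hB (Set.mem_Icc_of_Ioo hs) hy ht
  show deriv (fun s => pdy B s y t) x = _
  rw [h2.deriv_eq]
  exact h1.deriv

lemma pdx_pdx_eq (hT : 0 < T) (hx : x ∈ Set.Ioo (0:ℝ) 1) (hy : y ∈ Set.Icc (0:ℝ) 1)
    (ht : t ∈ Set.Icc 0 T) :
    pdx (pdx B) x y t = D2F T B (x, y, t) (1, 0, 0) (1, 0, 0) := by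
  have h1 := DFapply_hasDerivX hB hT ((1:ℝ), (0:ℝ), (0:ℝ)) hx hy ht
  have h2 : (fun s => pdx B s y t) =ᶠ[nhds x] (fun s => DF T B (s, y, t) (1, 0, 0)) := by
    filter_upwards [Ioo_mem_nhds hx.1 hx.2] with s hs
    exact pdx_eq hB hs hy ht
  show deriv (fun s => pdx B s y t) x = _
  rw [h2.deriv_eq]
  exact h1.deriv

lemma pdy_pdy_eq (hT : 0 < T) (hx : x ∈ Set.Icc (0:ℝ) 1) (hy : y ∈ Set.Ioo (0:ℝ) 1)
    (ht : t ∈ Set.Icc 0 T) :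
    pdy (pdy B) x y t = D2F T B (x, y, t) (0, 1, 0) (0, 1, 0) := by
  have h1 := DFapply_hasDerivY hB hT ((0:ℝ), (1:ℝ), (0:ℝ)) hx hy ht
  have h2 : (fun s => pdy B x s t) =ᶠ[nhds y] (fun s => DF T B (x, s, t) (0, 1, 0)) := by
    filter_upwards [Ioo_mem_nhds hy.1 hy.2] with s hs
    exact pdy_eq hB hx hs ht
  show deriv (fun s => pdy B x s t) y = _
  rw [h2.deriv_eq]
  exact h1.deriv

/-- symmetry of the second derivative at interior points -/
lemma D2F_symm (hp : (x, y, t) ∈ interior (KK T)) (v w : ℝ × ℝ × ℝ) :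
    D2F T B (x, y, t) v w = D2F T B (x, y, t) w v := by
  have hmem : KK T ∈ nhds (x, y, t) := mem_interior_iff_mem_nhds.mp hp
  have hsymm : IsSymmSndFDerivAt ℝ (FF B) (x, y, t) :=
    (hB.contDiffAt hmem).isSymmSndFDerivAt (by simp)
  have h1 : DF T B =ᶠ[nhds (x, y, t)] fderiv ℝ (FF B) := by
    filter_upwards [isOpen_interior.mem_nhds hp] with q hq
    show fderivWithin ℝ (FF B) (KK T) q = fderiv ℝ (FF B) q
    exact fderivWithin_of_mem_nhds (mem_interior_iff_mem_nhds.mp hq)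
  have h2 : D2F T B (x, y, t) = fderiv ℝ (fderiv ℝ (FF B)) (x, y, t) := by
    have heq : DF T B =ᶠ[nhdsWithin (x, y, t) (KK T)] fderiv ℝ (FF B) :=
      h1.filter_mono nhdsWithin_le_nhds
    have h3 := heq.fderivWithin_eq (𝕜 := ℝ) h1.self_of_nhds
    rw [D2F, h3]
    exact fderivWithin_of_mem_nhds hmem
  rw [h2]; exact hsymm v w
end Field
end
noncomputable section
open Set

def QQ : Set (ℝ × ℝ) := Set.Icc 0 1 ×ˢ Set.Icc 0 1

lemma uniqueDiffOn_QQ : UniqueDiffOn ℝ QQ :=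
  (uniqueDiffOn_Icc one_pos).prod (uniqueDiffOn_Icc one_pos)

lemma interior_QQ : interior QQ = Set.Ioo 0 1 ×ˢ Set.Ioo 0 1 := by
  rw [QQ, interior_prod_eq, interior_Icc]

def DU (u : ℝ → ℝ → ℝ) : ℝ × ℝ → ℝ × ℝ →L[ℝ] ℝ :=
  fderivWithin ℝ (fun p : ℝ × ℝ => u p.1 p.2) QQ

section Ubridge
variable {u : ℝ → ℝ → ℝ}
  (hu : ContDiffOn ℝ 1 (fun p : ℝ × ℝ => u p.1 p.2) QQ)

include hu

lemma contDU : ContinuousOn (DU u) QQ :=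
  hu.continuousOn_fderivWithin uniqueDiffOn_QQ le_rfl

lemma u_hasFDerivAt {x y : ℝ} (hx : x ∈ Set.Ioo (0:ℝ) 1) (hy : y ∈ Set.Ioo (0:ℝ) 1) :
    HasFDerivAt (fun p : ℝ × ℝ => u p.1 p.2) (DU u (x, y)) (x, y) := by
  have hmem : QQ ∈ nhds (x, y) :=
    mem_interior_iff_mem_nhds.mp (by rw [interior_QQ]; exact ⟨hx, hy⟩)
  have hd : DifferentiableAt ℝ (fun p : ℝ × ℝ => u p.1 p.2) (x, y) :=
    (hu.contDiffAt hmem).differentiableAt one_ne_zero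
  have : DU u (x, y) = fderiv ℝ (fun p : ℝ × ℝ => u p.1 p.2) (x, y) :=
    fderivWithin_of_mem_nhds hmem
  rw [this]
  exact hd.hasFDerivAt

lemma u_hasDerivX {x y : ℝ} (hx : x ∈ Set.Ioo (0:ℝ) 1) (hy : y ∈ Set.Ioo (0:ℝ) 1) :
    HasDerivAt (fun s => u s y) (DU u (x, y) (1, 0)) x := by
  have h := (u_hasFDerivAt hu hx hy).comp_hasDerivAt x
    ((hasDerivAt_id x).prodMk (hasDerivAt_const x y))
  exact h

lemma u_hasDerivY {x y : ℝ} (hx : x ∈ Set.Ioo (0:ℝ) 1) (hy : y ∈ Set.Ioo (0:ℝ) 1) :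
    HasDerivAt (fun s => u x s) (DU u (x, y) (0, 1)) y := by
  have h := (u_hasFDerivAt hu hx hy).comp_hasDerivAt y
    ((hasDerivAt_const y x).prodMk (hasDerivAt_id y))
  exact h

lemma pdx2_eq {x y : ℝ} (hx : x ∈ Set.Ioo (0:ℝ) 1) (hy : y ∈ Set.Ioo (0:ℝ) 1) :
    pdx2 u x y = DU u (x, y) (1, 0) := (u_hasDerivX hu hx hy).deriv

lemma pdy2_eq {x y : ℝ} (hx : x ∈ Set.Ioo (0:ℝ) 1) (hy : y ∈ Set.Ioo (0:ℝ) 1) :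
    pdy2 u x y = DU u (x, y) (0, 1) := (u_hasDerivY hu hx hy).deriv

end Ubridge
end
noncomputable section
open Set

variable {T : ℝ}

section Field2
variable {B : ℝ → ℝ → ℝ → ℝ}
  (hB : ContDiffOn ℝ 2 (fun p : ℝ × ℝ × ℝ => B p.1 p.2.1 p.2.2) (KK T))

include hB

lemma FF_hasFDerivAt {p : ℝ × ℝ × ℝ} (hp : p ∈ interior (KK T)) :
    HasFDerivAt (FF B) (DF T B p) p := by
  have hmem : KK T ∈ nhds p := mem_interior_iff_mem_nhds.mp hp
  have hd : DifferentiableAt ℝ (FF B) p :=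
    (hB.contDiffAt hmem).differentiableAt (by norm_num)
  have : DF T B p = fderiv ℝ (FF B) p := fderivWithin_of_mem_nhds hmem
  rw [this]; exact hd.hasFDerivAt

lemma DF_hasFDerivAt (hT : 0 < T) {p : ℝ × ℝ × ℝ} (hp : p ∈ interior (KK T)) :
    HasFDerivAt (DF T B) (D2F T B p) p := by
  have hmem : KK T ∈ nhds p := mem_interior_iff_mem_nhds.mp hp
  have hd : DifferentiableAt ℝ (DF T B) p :=
    ((hDF hB hT).contDiffAt hmem).differentiableAt one_ne_zero
  have : D2F T B p = fderiv ℝ (DF T B) p := fderivWithin_of_mem_nhds hmem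
  rw [this]; exact hd.hasFDerivAt

end Field2

/-- squared modulus of B -/
def BSQ (B1 B2 : ℝ → ℝ → ℝ → ℝ) : ℝ × ℝ × ℝ → ℝ :=
  fun p => (B1 p.1 p.2.1 p.2.2) ^ 2 + (B2 p.1 p.2.1 p.2.2) ^ 2

/-- time derivative of squared modulus, via within-derivatives -/
def TDER (T : ℝ) (B1 B2 : ℝ → ℝ → ℝ → ℝ) : ℝ × ℝ × ℝ → ℝ :=
  fun p => 2 * B1 p.1 p.2.1 p.2.2 * DF T B1 p (0, 0, 1)
    + 2 * B2 p.1 p.2.1 p.2.2 * DF T B2 p (0, 0, 1)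

/-- scalar curl of B, via within-derivatives -/
def OMG (T : ℝ) (B1 B2 : ℝ → ℝ → ℝ → ℝ) : ℝ × ℝ × ℝ → ℝ :=
  fun p => DF T B2 p (1, 0, 0) - DF T B1 p (0, 1, 0)

section Cont
variable {B1 B2 : ℝ → ℝ → ℝ → ℝ}
  (hB1 : ContDiffOn ℝ 2 (fun p : ℝ × ℝ × ℝ => B1 p.1 p.2.1 p.2.2) (KK T))
  (hB2 : ContDiffOn ℝ 2 (fun p : ℝ × ℝ × ℝ => B2 p.1 p.2.1 p.2.2) (KK T))

/-- evaluation of a continuous CLM-valued map is continuous -/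
lemma contApply {X : Type*} [TopologicalSpace X] {E : Type*} [NormedAddCommGroup E]
    [NormedSpace ℝ E] {F : Type*} [NormedAddCommGroup F] [NormedSpace ℝ F]
    {g : X → F →L[ℝ] E} {s : Set X}
    (hg : ContinuousOn g s) (v : F) : ContinuousOn (fun x => g x v) s :=
  (ContinuousLinearMap.apply ℝ E v).continuous.comp_continuousOn hg

lemma contApply2 {X : Type*} [TopologicalSpace X]
    {g : X → ℝ × ℝ × ℝ →L[ℝ] ℝ × ℝ × ℝ →L[ℝ] ℝ} {s : Set X}
    (hg : ContinuousOn g s) (v w : ℝ × ℝ × ℝ) : ContinuousOn (fun x => g x v w) s := by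
  exact contApply (contApply (g := g) hg v) w

include hB1 hB2

lemma contBSQ : ContinuousOn (BSQ B1 B2) (KK T) := by
  exact ((hB1.continuousOn.pow 2).add (hB2.continuousOn.pow 2))

lemma contTDER (hT : 0 < T) : ContinuousOn (TDER T B1 B2) (KK T) := by
  exact (((continuousOn_const.mul hB1.continuousOn).mul
      (contApply (contDF hB1 hT) _)).add
    ((continuousOn_const.mul hB2.continuousOn).mul (contApply (contDF hB2 hT) _)))

lemma contOMG (hT : 0 < T) : ContinuousOn (OMG T B1 B2) (KK T) := by
  exact (contApply (contDF hB2 hT) _).sub (contApply (contDF hB1 hT) _)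

end Cont
end
noncomputable section
open Set

def IOTA (t₀ : ℝ) : ℝ × ℝ → ℝ × ℝ × ℝ := fun q => (q.1, q.2, t₀)

def LCLM : ℝ × ℝ →L[ℝ] ℝ × ℝ × ℝ :=
  (ContinuousLinearMap.fst ℝ ℝ ℝ).prod ((ContinuousLinearMap.snd ℝ ℝ ℝ).prod 0)

lemma LCLM_apply (v : ℝ × ℝ) : LCLM v = (v.1, v.2, 0) := rfl

lemma IOTA_hasFDerivAt (t₀ : ℝ) (q : ℝ × ℝ) : HasFDerivAt (IOTA t₀) LCLM q :=
  (hasFDerivAt_fst).prodMk ((hasFDerivAt_snd).prodMk (hasFDerivAt_const _ _))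

/-- spatial derivative (within-version) of `q ↦ B (q, t₀)` -/
def AF (T : ℝ) (B : ℝ → ℝ → ℝ → ℝ) (t₀ : ℝ) : ℝ × ℝ → ℝ × ℝ →L[ℝ] ℝ :=
  fun q => (DF T B (IOTA t₀ q)).comp LCLM

/-- spatial derivative (within-version) of `q ↦ OMG (q, t₀)` -/
def MF (T : ℝ) (B1 B2 : ℝ → ℝ → ℝ → ℝ) (t₀ : ℝ) : ℝ × ℝ → ℝ × ℝ →L[ℝ] ℝ :=
  fun q => ((ContinuousLinearMap.apply ℝ ℝ ((1:ℝ), (0:ℝ), (0:ℝ))).comp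
      (D2F T B2 (IOTA t₀ q))).comp LCLM
    - ((ContinuousLinearMap.apply ℝ ℝ ((0:ℝ), (1:ℝ), (0:ℝ))).comp
      (D2F T B1 (IOTA t₀ q))).comp LCLM

/-- the flux vector field, first component -/
def W1 (T ε : ℝ) (u1 : ℝ → ℝ → ℝ) (B1 B2 : ℝ → ℝ → ℝ → ℝ) (t₀ : ℝ) : ℝ × ℝ → ℝ :=
  fun q => -(u1 q.1 q.2 * BSQ B1 B2 (IOTA t₀ q))
    + 2 * ε * B2 q.1 q.2 t₀ * OMG T B1 B2 (IOTA t₀ q)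

def W2 (T ε : ℝ) (u2 : ℝ → ℝ → ℝ) (B1 B2 : ℝ → ℝ → ℝ → ℝ) (t₀ : ℝ) : ℝ × ℝ → ℝ :=
  fun q => -(u2 q.1 q.2 * BSQ B1 B2 (IOTA t₀ q))
    - 2 * ε * B1 q.1 q.2 t₀ * OMG T B1 B2 (IOTA t₀ q)

/-- derivative of `W1` -/
def W1' (T ε : ℝ) (u1 : ℝ → ℝ → ℝ) (B1 B2 : ℝ → ℝ → ℝ → ℝ) (t₀ : ℝ) :
    ℝ × ℝ → ℝ × ℝ →L[ℝ] ℝ :=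
  fun q => -(u1 q.1 q.2 • ((2 * B1 q.1 q.2 t₀) • AF T B1 t₀ q
      + (2 * B2 q.1 q.2 t₀) • AF T B2 t₀ q) + BSQ B1 B2 (IOTA t₀ q) • DU u1 q)
    + ((2 * ε * B2 q.1 q.2 t₀) • MF T B1 B2 t₀ q
      + OMG T B1 B2 (IOTA t₀ q) • ((2 * ε) • AF T B2 t₀ q))

def W2' (T ε : ℝ) (u2 : ℝ → ℝ → ℝ) (B1 B2 : ℝ → ℝ → ℝ → ℝ) (t₀ : ℝ) :
    ℝ × ℝ → ℝ × ℝ →L[ℝ] ℝ :=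
  fun q => -(u2 q.1 q.2 • ((2 * B1 q.1 q.2 t₀) • AF T B1 t₀ q
      + (2 * B2 q.1 q.2 t₀) • AF T B2 t₀ q) + BSQ B1 B2 (IOTA t₀ q) • DU u2 q)
    - ((2 * ε * B1 q.1 q.2 t₀) • MF T B1 B2 t₀ q
      + OMG T B1 B2 (IOTA t₀ q) • ((2 * ε) • AF T B1 t₀ q))

section DivData
variable {T : ℝ} {u1 u2 : ℝ → ℝ → ℝ} {B1 B2 : ℝ → ℝ → ℝ → ℝ}
  (hu1 : ContDiffOn ℝ 1 (fun p : ℝ × ℝ => u1 p.1 p.2) QQ)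
  (hB1 : ContDiffOn ℝ 2 (fun p : ℝ × ℝ × ℝ => B1 p.1 p.2.1 p.2.2) (KK T))
  (hB2 : ContDiffOn ℝ 2 (fun p : ℝ × ℝ × ℝ => B2 p.1 p.2.1 p.2.2) (KK T))

lemma interior_mem {x y t₀ : ℝ} (hq : (x, y) ∈ Set.Ioo (0:ℝ) 1 ×ˢ Set.Ioo (0:ℝ) 1)
    (ht₀ : t₀ ∈ Set.Ioo 0 T) : ((x : ℝ), (y : ℝ), t₀) ∈ interior (KK T) := by
  rw [interior_KK]; exact ⟨hq.1, hq.2, ht₀⟩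

include hB1 hB2 in
lemma hasFDerivAt_W1 (hT : 0 < T) (ε t₀ : ℝ) (ht₀ : t₀ ∈ Set.Ioo 0 T)
    (hu1 : ContDiffOn ℝ 1 (fun p : ℝ × ℝ => u1 p.1 p.2) QQ)
    {q : ℝ × ℝ} (hq : q ∈ Set.Ioo (0:ℝ) 1 ×ˢ Set.Ioo (0:ℝ) 1) :
    HasFDerivAt (W1 T ε u1 B1 B2 t₀) (W1' T ε u1 B1 B2 t₀ q) q := by
  obtain ⟨x, y⟩ := q
  have hqi : ((x:ℝ), (y:ℝ), t₀) ∈ interior (KK T) := interior_mem hq ht₀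
  have hι : HasFDerivAt (IOTA t₀) LCLM (x, y) := IOTA_hasFDerivAt t₀ (x, y)
  have hb1 : HasFDerivAt (fun q : ℝ × ℝ => B1 q.1 q.2 t₀) (AF T B1 t₀ (x, y)) (x, y) :=
    ((FF_hasFDerivAt hB1 hqi).comp (x, y) hι :)
  have hb2 : HasFDerivAt (fun q : ℝ × ℝ => B2 q.1 q.2 t₀) (AF T B2 t₀ (x, y)) (x, y) :=
    ((FF_hasFDerivAt hB2 hqi).comp (x, y) hι :)
  have hbsq : HasFDerivAt (fun q : ℝ × ℝ => BSQ B1 B2 (IOTA t₀ q))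
      ((2 * B1 x y t₀) • AF T B1 t₀ (x, y) + (2 * B2 x y t₀) • AF T B2 t₀ (x, y)) (x, y) := by
    have h12 := (hb1.mul hb1).add (hb2.mul hb2)
    have h13 : HasFDerivAt (fun q : ℝ × ℝ => BSQ B1 B2 (IOTA t₀ q))
        (B1 (x,y).1 (x,y).2 t₀ • AF T B1 t₀ (x, y) + B1 (x,y).1 (x,y).2 t₀ • AF T B1 t₀ (x, y) +
          (B2 (x,y).1 (x,y).2 t₀ • AF T B2 t₀ (x, y) + B2 (x,y).1 (x,y).2 t₀ • AF T B2 t₀ (x, y)))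
        (x, y) := by
      refine h12.congr_of_eventuallyEq ?_
      filter_upwards with q
      simp only [BSQ, IOTA, Pi.add_apply, Pi.mul_apply]
      ring
    refine h13.congr_fderiv ?_
    refine ContinuousLinearMap.ext fun v => ?_
    simp only [ContinuousLinearMap.add_apply, ContinuousLinearMap.smul_apply, smul_eq_mul]
    ring
  have hom : HasFDerivAt (fun q : ℝ × ℝ => OMG T B1 B2 (IOTA t₀ q))
      (MF T B1 B2 t₀ (x, y)) (x, y) := by
    have h2 : HasFDerivAt (fun p : ℝ × ℝ × ℝ => DF T B2 p ((1:ℝ), (0:ℝ), (0:ℝ)))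
        ((ContinuousLinearMap.apply ℝ ℝ ((1:ℝ), (0:ℝ), (0:ℝ))).comp (D2F T B2 ((x:ℝ), y, t₀)))
        ((x:ℝ), y, t₀) :=
      ((ContinuousLinearMap.apply ℝ ℝ _).hasFDerivAt.comp _ (DF_hasFDerivAt hB2 hT hqi) :)
    have h1 : HasFDerivAt (fun p : ℝ × ℝ × ℝ => DF T B1 p ((0:ℝ), (1:ℝ), (0:ℝ)))
        ((ContinuousLinearMap.apply ℝ ℝ ((0:ℝ), (1:ℝ), (0:ℝ))).comp (D2F T B1 ((x:ℝ), y, t₀)))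
        ((x:ℝ), y, t₀) :=
      ((ContinuousLinearMap.apply ℝ ℝ _).hasFDerivAt.comp _ (DF_hasFDerivAt hB1 hT hqi) :)
    have h3 := ((h2.sub h1).comp (x, y) hι :)
    refine HasFDerivAt.congr_fderiv h3 ?_
    refine ContinuousLinearMap.ext fun v => ?_
    simp [MF, IOTA]
  have hu : HasFDerivAt (fun q : ℝ × ℝ => u1 q.1 q.2) (DU u1 (x, y)) (x, y) :=
    u_hasFDerivAt hu1 hq.1 hq.2
  have H := ((hu.mul hbsq).neg).add (((hb2.const_mul (2 * ε)).mul hom))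
  refine H.congr_fderiv ?_
  refine ContinuousLinearMap.ext fun v => ?_
  simp only [W1', IOTA, ContinuousLinearMap.add_apply, ContinuousLinearMap.smul_apply,
    ContinuousLinearMap.neg_apply, ContinuousLinearMap.sub_apply, smul_eq_mul]

include hB1 hB2 in
lemma hasFDerivAt_W2 (hT : 0 < T) (ε t₀ : ℝ) (ht₀ : t₀ ∈ Set.Ioo 0 T)
    (hu2 : ContDiffOn ℝ 1 (fun p : ℝ × ℝ => u2 p.1 p.2) QQ)
    {q : ℝ × ℝ} (hq : q ∈ Set.Ioo (0:ℝ) 1 ×ˢ Set.Ioo (0:ℝ) 1) :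
    HasFDerivAt (W2 T ε u2 B1 B2 t₀) (W2' T ε u2 B1 B2 t₀ q) q := by
  obtain ⟨x, y⟩ := q
  have hqi : ((x:ℝ), (y:ℝ), t₀) ∈ interior (KK T) := interior_mem hq ht₀
  have hι : HasFDerivAt (IOTA t₀) LCLM (x, y) := IOTA_hasFDerivAt t₀ (x, y)
  have hb1 : HasFDerivAt (fun q : ℝ × ℝ => B1 q.1 q.2 t₀) (AF T B1 t₀ (x, y)) (x, y) :=
    ((FF_hasFDerivAt hB1 hqi).comp (x, y) hι :)
  have hb2 : HasFDerivAt (fun q : ℝ × ℝ => B2 q.1 q.2 t₀) (AF T B2 t₀ (x, y)) (x, y) :=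
    ((FF_hasFDerivAt hB2 hqi).comp (x, y) hι :)
  have hbsq : HasFDerivAt (fun q : ℝ × ℝ => BSQ B1 B2 (IOTA t₀ q))
      ((2 * B1 x y t₀) • AF T B1 t₀ (x, y) + (2 * B2 x y t₀) • AF T B2 t₀ (x, y)) (x, y) := by
    have h12 := (hb1.mul hb1).add (hb2.mul hb2)
    have h13 : HasFDerivAt (fun q : ℝ × ℝ => BSQ B1 B2 (IOTA t₀ q))
        (B1 (x,y).1 (x,y).2 t₀ • AF T B1 t₀ (x, y) + B1 (x,y).1 (x,y).2 t₀ • AF T B1 t₀ (x, y) +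
          (B2 (x,y).1 (x,y).2 t₀ • AF T B2 t₀ (x, y) + B2 (x,y).1 (x,y).2 t₀ • AF T B2 t₀ (x, y)))
        (x, y) := by
      refine h12.congr_of_eventuallyEq ?_
      filter_upwards with q
      simp only [BSQ, IOTA, Pi.add_apply, Pi.mul_apply]
      ring
    refine h13.congr_fderiv ?_
    refine ContinuousLinearMap.ext fun v => ?_
    simp only [ContinuousLinearMap.add_apply, ContinuousLinearMap.smul_apply, smul_eq_mul]
    ring
  have hom : HasFDerivAt (fun q : ℝ × ℝ => OMG T B1 B2 (IOTA t₀ q))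
      (MF T B1 B2 t₀ (x, y)) (x, y) := by
    have h2 : HasFDerivAt (fun p : ℝ × ℝ × ℝ => DF T B2 p ((1:ℝ), (0:ℝ), (0:ℝ)))
        ((ContinuousLinearMap.apply ℝ ℝ ((1:ℝ), (0:ℝ), (0:ℝ))).comp (D2F T B2 ((x:ℝ), y, t₀)))
        ((x:ℝ), y, t₀) :=
      ((ContinuousLinearMap.apply ℝ ℝ _).hasFDerivAt.comp _ (DF_hasFDerivAt hB2 hT hqi) :)
    have h1 : HasFDerivAt (fun p : ℝ × ℝ × ℝ => DF T B1 p ((0:ℝ), (1:ℝ), (0:ℝ)))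
        ((ContinuousLinearMap.apply ℝ ℝ ((0:ℝ), (1:ℝ), (0:ℝ))).comp (D2F T B1 ((x:ℝ), y, t₀)))
        ((x:ℝ), y, t₀) :=
      ((ContinuousLinearMap.apply ℝ ℝ _).hasFDerivAt.comp _ (DF_hasFDerivAt hB1 hT hqi) :)
    have h3 := ((h2.sub h1).comp (x, y) hι :)
    refine HasFDerivAt.congr_fderiv h3 ?_
    refine ContinuousLinearMap.ext fun v => ?_
    simp [MF, IOTA]
  have hu : HasFDerivAt (fun q : ℝ × ℝ => u2 q.1 q.2) (DU u2 (x, y)) (x, y) :=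
    u_hasFDerivAt hu2 hq.1 hq.2
  have H := ((hu.mul hbsq).neg).sub (((hb1.const_mul (2 * ε)).mul hom))
  refine H.congr_fderiv ?_
  refine ContinuousLinearMap.ext fun v => ?_
  simp only [W2', IOTA, ContinuousLinearMap.add_apply, ContinuousLinearMap.smul_apply,
    ContinuousLinearMap.neg_apply, ContinuousLinearMap.sub_apply, smul_eq_mul]

end DivData
end
noncomputable section
open Set

lemma contSlice {T : ℝ} {E : Type*} [TopologicalSpace E] {g : ℝ × ℝ × ℝ → E}
    (hg : ContinuousOn g (KK T)) {t₀ : ℝ} (ht₀ : t₀ ∈ Set.Icc 0 T) :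
    ContinuousOn (fun q => g (IOTA t₀ q)) QQ :=
  hg.comp ((Continuous.prodMk continuous_fst
    (Continuous.prodMk continuous_snd continuous_const)).continuousOn)
    (fun q hq => ⟨hq.1, hq.2, ht₀⟩)

section ContW
variable {T ε : ℝ} {u1 u2 : ℝ → ℝ → ℝ} {B1 B2 : ℝ → ℝ → ℝ → ℝ}
  (hu1 : ContDiffOn ℝ 1 (fun p : ℝ × ℝ => u1 p.1 p.2) QQ)
  (hB1 : ContDiffOn ℝ 2 (fun p : ℝ × ℝ × ℝ => B1 p.1 p.2.1 p.2.2) (KK T))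
  (hB2 : ContDiffOn ℝ 2 (fun p : ℝ × ℝ × ℝ => B2 p.1 p.2.1 p.2.2) (KK T))

include hu1 hB1 hB2 in
lemma contW1 {t₀ : ℝ} (hT : 0 < T) (ht₀ : t₀ ∈ Set.Icc 0 T) :
    ContinuousOn (W1 T ε u1 B1 B2 t₀) QQ := by
  refine ContinuousOn.add (ContinuousOn.neg (hu1.continuousOn.mul
    (contSlice (contBSQ hB1 hB2) ht₀))) ?_
  refine ContinuousOn.mul (continuousOn_const.mul ?_) (contSlice (contOMG hB1 hB2 hT) ht₀)
  exact contSlice hB2.continuousOn ht₀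

include hu1 hB1 hB2 in
lemma contW2 {t₀ : ℝ} (hT : 0 < T) (ht₀ : t₀ ∈ Set.Icc 0 T) :
    ContinuousOn (W2 T ε u1 B1 B2 t₀) QQ := by
  refine ContinuousOn.sub (ContinuousOn.neg (hu1.continuousOn.mul
    (contSlice (contBSQ hB1 hB2) ht₀))) ?_
  refine ContinuousOn.mul (continuousOn_const.mul ?_) (contSlice (contOMG hB1 hB2 hT) ht₀)
  exact contSlice hB1.continuousOn ht₀

include hu1 hB1 hB2 in
lemma contW1'v {t₀ : ℝ} (hT : 0 < T) (ht₀ : t₀ ∈ Set.Icc 0 T) (v : ℝ × ℝ) :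
    ContinuousOn (fun q => W1' T ε u1 B1 B2 t₀ q v) QQ := by
  simp only [W1', ContinuousLinearMap.add_apply, ContinuousLinearMap.smul_apply,
    ContinuousLinearMap.neg_apply, ContinuousLinearMap.sub_apply, ContinuousLinearMap.comp_apply,
    AF, MF, ContinuousLinearMap.apply_apply, smul_eq_mul]
  refine ContinuousOn.add (ContinuousOn.neg (ContinuousOn.add ?_ ?_)) (ContinuousOn.add ?_ ?_)
  · refine hu1.continuousOn.mul (ContinuousOn.add ?_ ?_)
    · exact (continuousOn_const.mul (contSlice hB1.continuousOn ht₀)).mul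
        (contApply (contSlice (contDF hB1 hT) ht₀) _)
    · exact (continuousOn_const.mul (contSlice hB2.continuousOn ht₀)).mul
        (contApply (contSlice (contDF hB2 hT) ht₀) _)
  · exact (contSlice (contBSQ hB1 hB2) ht₀).mul (contApply (contDU hu1) _)
  · refine ContinuousOn.mul (continuousOn_const.mul (contSlice hB2.continuousOn ht₀)) ?_
    exact (contApply (contApply (contSlice (contD2F hB2 hT) ht₀) _) _).sub
      (contApply (contApply (contSlice (contD2F hB1 hT) ht₀) _) _)
  · exact (contSlice (contOMG hB1 hB2 hT) ht₀).mul
      (continuousOn_const.mul (contApply (contSlice (contDF hB2 hT) ht₀) _))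

include hu1 hB1 hB2 in
lemma contW2'v {t₀ : ℝ} (hT : 0 < T) (ht₀ : t₀ ∈ Set.Icc 0 T) (v : ℝ × ℝ) :
    ContinuousOn (fun q => W2' T ε u1 B1 B2 t₀ q v) QQ := by
  simp only [W2', ContinuousLinearMap.add_apply, ContinuousLinearMap.smul_apply,
    ContinuousLinearMap.neg_apply, ContinuousLinearMap.sub_apply, ContinuousLinearMap.comp_apply,
    AF, MF, ContinuousLinearMap.apply_apply, smul_eq_mul]
  refine ContinuousOn.sub (ContinuousOn.neg (ContinuousOn.add ?_ ?_)) (ContinuousOn.add ?_ ?_)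
  · refine hu1.continuousOn.mul (ContinuousOn.add ?_ ?_)
    · exact (continuousOn_const.mul (contSlice hB1.continuousOn ht₀)).mul
        (contApply (contSlice (contDF hB1 hT) ht₀) _)
    · exact (continuousOn_const.mul (contSlice hB2.continuousOn ht₀)).mul
        (contApply (contSlice (contDF hB2 hT) ht₀) _)
  · exact (contSlice (contBSQ hB1 hB2) ht₀).mul (contApply (contDU hu1) _)
  · refine ContinuousOn.mul (continuousOn_const.mul (contSlice hB1.continuousOn ht₀)) ?_
    exact (contApply (contApply (contSlice (contD2F hB2 hT) ht₀) _) _).sub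
      (contApply (contApply (contSlice (contD2F hB1 hT) ht₀) _) _)
  · exact (contSlice (contOMG hB1 hB2 hT) ht₀).mul
      (continuousOn_const.mul (contApply (contSlice (contDF hB1 hT) ht₀) _))

end ContW
end
noncomputable section
open Set MeasureTheory

lemma QQ_eq : QQ = Set.Icc ((0:ℝ), (0:ℝ)) (1, 1) := by
  rw [QQ, ← Set.Icc_prod_Icc]

section DivZero
variable {T ε : ℝ} {u1 u2 : ℝ → ℝ → ℝ} {B1 B2 : ℝ → ℝ → ℝ → ℝ}
  (hu1 : ContDiffOn ℝ 1 (fun p : ℝ × ℝ => u1 p.1 p.2) QQ)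
  (hu2 : ContDiffOn ℝ 1 (fun p : ℝ × ℝ => u2 p.1 p.2) QQ)
  (hB1 : ContDiffOn ℝ 2 (fun p : ℝ × ℝ × ℝ => B1 p.1 p.2.1 p.2.2) (KK T))
  (hB2 : ContDiffOn ℝ 2 (fun p : ℝ × ℝ × ℝ => B2 p.1 p.2.1 p.2.2) (KK T))
  (hbc : ∀ x y t : ℝ, x ∈ Set.Icc (0:ℝ) 1 → y ∈ Set.Icc (0:ℝ) 1 → t ∈ Set.Icc 0 T →
      (x = 0 ∨ x = 1 ∨ y = 0 ∨ y = 1) → B1 x y t = 0 ∧ B2 x y t = 0)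

include hu1 hu2 hB1 hB2 hbc in
lemma divint_zero (hT : 0 < T) {t₀ : ℝ} (ht₀ : t₀ ∈ Set.Ioo 0 T) :
    ∫ q in Set.Icc ((0:ℝ), (0:ℝ)) (1, 1),
      (W1' T ε u1 B1 B2 t₀ q (1, 0) + W2' T ε u2 B1 B2 t₀ q (0, 1)) = 0 := by
  have ht₀' : t₀ ∈ Set.Icc 0 T := Set.mem_Icc_of_Ioo ht₀
  have key := integral_divergence_prod_Icc_of_hasFDerivAt_off_countable_of_le
    (W1 T ε u1 B1 B2 t₀) (W2 T ε u2 B1 B2 t₀)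
    (W1' T ε u1 B1 B2 t₀) (W2' T ε u2 B1 B2 t₀)
    ((0:ℝ), (0:ℝ)) (1, 1) (by constructor <;> norm_num) ∅ countable_empty
    (QQ_eq ▸ contW1 hu1 hB1 hB2 hT ht₀')
    (QQ_eq ▸ contW2 hu2 hB1 hB2 hT ht₀')
    (fun q hq => hasFDerivAt_W1 hB1 hB2 hT ε t₀ ht₀ hu1 hq.1)
    (fun q hq => hasFDerivAt_W2 hB1 hB2 hT ε t₀ ht₀ hu2 hq.1)
    (by
      refine ContinuousOn.integrableOn_compact ?_ ?_
      · rw [← QQ_eq]; exact isCompact_Icc.prod isCompact_Icc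
      · rw [← QQ_eq]
        exact (contW1'v hu1 hB1 hB2 hT ht₀' _).add (contW2'v hu2 hB1 hB2 hT ht₀' _))
  rw [key]
  have hB0 : ∀ x y : ℝ, x ∈ Set.Icc (0:ℝ) 1 → y ∈ Set.Icc (0:ℝ) 1 →
      (x = 0 ∨ x = 1 ∨ y = 0 ∨ y = 1) → BSQ B1 B2 (IOTA t₀ (x, y)) = 0 ∧
        B1 x y t₀ = 0 ∧ B2 x y t₀ = 0 := by
    intro x y hx hy hor
    obtain ⟨h1, h2⟩ := hbc x y t₀ hx hy ht₀' hor
    exact ⟨by simp [BSQ, IOTA, h1, h2], h1, h2⟩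
  have e01 : Set.uIcc (0:ℝ) 1 = Set.Icc (0:ℝ) 1 := Set.uIcc_of_le zero_le_one
  have i1 : ∫ x in (0:ℝ)..1, W2 T ε u2 B1 B2 t₀ (x, 1) = 0 := by
    rw [intervalIntegral.integral_congr (g := fun _ => (0:ℝ)) ?_, intervalIntegral.integral_zero]
    intro x hx
    rw [e01] at hx
    obtain ⟨hb, h1, h2⟩ := hB0 x 1 hx (by norm_num) (by tauto)
    simp [W2, hb, h1]
  have i2 : ∫ x in (0:ℝ)..1, W2 T ε u2 B1 B2 t₀ (x, 0) = 0 := by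
    rw [intervalIntegral.integral_congr (g := fun _ => (0:ℝ)) ?_, intervalIntegral.integral_zero]
    intro x hx
    rw [e01] at hx
    obtain ⟨hb, h1, h2⟩ := hB0 x 0 hx (by norm_num) (by tauto)
    simp [W2, hb, h1]
  have i3 : ∫ y in (0:ℝ)..1, W1 T ε u1 B1 B2 t₀ (1, y) = 0 := by
    rw [intervalIntegral.integral_congr (g := fun _ => (0:ℝ)) ?_, intervalIntegral.integral_zero]
    intro y hy
    rw [e01] at hy
    obtain ⟨hb, h1, h2⟩ := hB0 1 y (by norm_num) hy (by tauto)
    simp [W1, hb, h2]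
  have i4 : ∫ y in (0:ℝ)..1, W1 T ε u1 B1 B2 t₀ (0, y) = 0 := by
    rw [intervalIntegral.integral_congr (g := fun _ => (0:ℝ)) ?_, intervalIntegral.integral_zero]
    intro y hy
    rw [e01] at hy
    obtain ⟨hb, h1, h2⟩ := hB0 0 y (by norm_num) hy (by tauto)
    simp [W1, hb, h2]
  rw [i1, i2, i3, i4]
  ring

end DivZero
end
noncomputable section
open Set

section Pointwise
variable {T ε α : ℝ} {u1 u2 : ℝ → ℝ → ℝ} {B1 B2 : ℝ → ℝ → ℝ → ℝ}

lemma pointwise_bound (hT : 0 < T)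
    (hu1 : ContDiffOn ℝ 1 (fun p : ℝ × ℝ => u1 p.1 p.2) QQ)
    (hu2 : ContDiffOn ℝ 1 (fun p : ℝ × ℝ => u2 p.1 p.2) QQ)
    (hB1 : ContDiffOn ℝ 2 (fun p : ℝ × ℝ × ℝ => B1 p.1 p.2.1 p.2.2) (KK T))
    (hB2 : ContDiffOn ℝ 2 (fun p : ℝ × ℝ × ℝ => B2 p.1 p.2.1 p.2.2) (KK T))
    (hα : ∀ x y : ℝ, x ∈ Set.Icc (0:ℝ) 1 → y ∈ Set.Icc (0:ℝ) 1 → ∀ ξ1 ξ2 : ℝ,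
      2 * (-(pdy2 u2 x y) * ξ1 ^ 2 + pdy2 u1 x y * ξ1 * ξ2 + pdx2 u2 x y * ξ1 * ξ2
            - pdx2 u1 x y * ξ2 ^ 2)
        + (pdx2 u1 x y + pdy2 u2 x y) * (ξ1 ^ 2 + ξ2 ^ 2)
      ≤ 2 * α * (ξ1 ^ 2 + ξ2 ^ 2))
    (hpde1 : ∀ x y t : ℝ, x ∈ Set.Ioo (0:ℝ) 1 → y ∈ Set.Ioo (0:ℝ) 1 → t ∈ Set.Ioo 0 T →
      pdt B1 x y t + u1 x y * pdx B1 x y t + u2 x y * pdy B1 x y t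
        + pdy2 u2 x y * B1 x y t - pdy2 u1 x y * B2 x y t
      = ε * (pdy (pdy B1) x y t - pdx (pdy B2) x y t))
    (hpde2 : ∀ x y t : ℝ, x ∈ Set.Ioo (0:ℝ) 1 → y ∈ Set.Ioo (0:ℝ) 1 → t ∈ Set.Ioo 0 T →
      pdt B2 x y t + u1 x y * pdx B2 x y t + u2 x y * pdy B2 x y t
        - pdx2 u2 x y * B1 x y t + pdx2 u1 x y * B2 x y t
      = ε * (pdx (pdx B2) x y t - pdx (pdy B1) x y t))
    {x y t₀ : ℝ} (hx : x ∈ Set.Ioo (0:ℝ) 1) (hy : y ∈ Set.Ioo (0:ℝ) 1)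
    (ht₀ : t₀ ∈ Set.Ioo 0 T) :
    TDER T B1 B2 (x, y, t₀) ≤
      (W1' T ε u1 B1 B2 t₀ (x, y) (1, 0) + W2' T ε u2 B1 B2 t₀ (x, y) (0, 1))
        + 2 * α * BSQ B1 B2 (x, y, t₀) - 2 * ε * (OMG T B1 B2 (x, y, t₀)) ^ 2 := by
  have hxI : x ∈ Set.Icc (0:ℝ) 1 := Set.mem_Icc_of_Ioo hx
  have hyI : y ∈ Set.Icc (0:ℝ) 1 := Set.mem_Icc_of_Ioo hy
  have htI : t₀ ∈ Set.Icc 0 T := Set.mem_Icc_of_Ioo ht₀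
  have hqi : ((x:ℝ), (y:ℝ), t₀) ∈ interior (KK T) := interior_mem ⟨hx, hy⟩ ht₀
  have E1 := hpde1 x y t₀ hx hy ht₀
  have E2 := hpde2 x y t₀ hx hy ht₀
  rw [pdt_eq hB1 hxI hyI ht₀, pdx_eq hB1 hx hyI htI, pdy_eq hB1 hxI hy htI,
    pdy2_eq hu2 hx hy, pdy2_eq hu1 hx hy, pdy_pdy_eq hB1 hT hxI hy htI,
    pdx_pdy_eq hB2 hT hx hy htI] at E1
  rw [pdt_eq hB2 hxI hyI ht₀, pdx_eq hB2 hx hyI htI, pdy_eq hB2 hxI hy htI,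
    pdx2_eq hu2 hx hy, pdx2_eq hu1 hx hy, pdx_pdx_eq hB2 hT hx hyI htI,
    pdx_pdy_eq hB1 hT hx hy htI] at E2
  have hαq := hα x y hxI hyI (B1 x y t₀) (B2 x y t₀)
  rw [pdx2_eq hu1 hx hy, pdy2_eq hu1 hx hy, pdx2_eq hu2 hx hy, pdy2_eq hu2 hx hy] at hαq
  have hsym : D2F T B2 ((x:ℝ), y, t₀) ((0:ℝ), (1:ℝ), (0:ℝ)) ((1:ℝ), (0:ℝ), (0:ℝ))
      = D2F T B2 ((x:ℝ), y, t₀) ((1:ℝ), (0:ℝ), (0:ℝ)) ((0:ℝ), (1:ℝ), (0:ℝ)) :=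
    D2F_symm hB2 hqi _ _
  have key : W1' T ε u1 B1 B2 t₀ (x, y) (1, 0) + W2' T ε u2 B1 B2 t₀ (x, y) (0, 1)
      = TDER T B1 B2 (x, y, t₀)
        - (2 * (-(DU u2 (x,y) (0,1)) * (B1 x y t₀) ^ 2
            + DU u1 (x,y) (0,1) * (B1 x y t₀) * (B2 x y t₀)
            + DU u2 (x,y) (1,0) * (B1 x y t₀) * (B2 x y t₀)
            - DU u1 (x,y) (1,0) * (B2 x y t₀) ^ 2)
          + (DU u1 (x,y) (1,0) + DU u2 (x,y) (0,1))
            * ((B1 x y t₀) ^ 2 + (B2 x y t₀) ^ 2))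
        + 2 * ε * (OMG T B1 B2 (x, y, t₀)) ^ 2 := by
    simp only [W1', W2', TDER, BSQ, OMG, AF, MF, IOTA, ContinuousLinearMap.add_apply,
      ContinuousLinearMap.smul_apply, ContinuousLinearMap.neg_apply,
      ContinuousLinearMap.sub_apply, ContinuousLinearMap.comp_apply,
      ContinuousLinearMap.apply_apply, LCLM_apply, smul_eq_mul]
    linear_combination (-2 * B1 x y t₀) * E1 + (-2 * B2 x y t₀) * E2
      + (-2 * ε * B1 x y t₀) * hsym
  rw [key]
  have hbsq : BSQ B1 B2 (x, y, t₀) = (B1 x y t₀) ^ 2 + (B2 x y t₀) ^ 2 := rfl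
  rw [hbsq]
  linarith [hαq]

end Pointwise
end
noncomputable section
open Set MeasureTheory

/-- the open square -/
def OM : Set (ℝ × ℝ) := Set.Ioo (0:ℝ) 1 ×ˢ Set.Ioo (0:ℝ) 1

lemma OM_ae : OM =ᵐ[volume] Set.Icc ((0:ℝ), (0:ℝ)) (1, 1) := by
  rw [OM, ← Set.Icc_prod_Icc, MeasureTheory.Measure.volume_eq_prod]
  exact MeasureTheory.Measure.set_prod_ae_eq Ioo_ae_eq_Icc Ioo_ae_eq_Icc

lemma OM_subset : OM ⊆ QQ := Set.prod_mono Set.Ioo_subset_Icc_self Set.Ioo_subset_Icc_self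

lemma OM_meas : MeasurableSet OM := measurableSet_Ioo.prod measurableSet_Ioo

lemma integrableOn_slice {T : ℝ} {g : ℝ × ℝ × ℝ → ℝ} (hg : ContinuousOn g (KK T))
    {t₀ : ℝ} (ht₀ : t₀ ∈ Set.Icc 0 T) :
    IntegrableOn (fun q : ℝ × ℝ => g (IOTA t₀ q)) OM := by
  refine IntegrableOn.mono_set ?_ OM_subset
  exact (contSlice hg ht₀).integrableOn_compact (isCompact_Icc.prod isCompact_Icc)

lemma aesm_slice {T : ℝ} {g : ℝ × ℝ × ℝ → ℝ} (hg : ContinuousOn g (KK T))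
    {t₀ : ℝ} (ht₀ : t₀ ∈ Set.Icc 0 T) :
    AEStronglyMeasurable (fun q : ℝ × ℝ => g (IOTA t₀ q)) (volume.restrict OM) :=
  ((contSlice hg ht₀).mono OM_subset).aestronglyMeasurable OM_meas

/-- continuity in time of slice integrals -/
lemma cont_integral_slice {T : ℝ} (hT : 0 < T) {g : ℝ × ℝ × ℝ → ℝ}
    (hg : ContinuousOn g (KK T)) :
    ContinuousOn (fun t => ∫ q in OM, g (IOTA t q)) (Set.Icc 0 T) := by
  obtain ⟨C, hC⟩ := (isCompact_Icc.prod (isCompact_Icc.prod isCompact_Icc)).exists_bound_of_continuousOn hg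
  refine MeasureTheory.continuousOn_of_dominated (bound := fun _ => C) ?_ ?_ ?_ ?_
  · exact fun t ht => aesm_slice hg ht
  · intro t ht
    refine (MeasureTheory.ae_restrict_mem OM_meas).mono (fun q hq => ?_)
    exact hC _ ⟨(OM_subset hq).1, (OM_subset hq).2, ht⟩
  · rw [MeasureTheory.integrable_const_iff]
    right
    refine isFiniteMeasure_restrict.mpr (ne_of_lt ?_)
    exact lt_of_le_of_lt (measure_mono OM_subset) (isCompact_Icc.prod isCompact_Icc).measure_lt_top
  · refine (MeasureTheory.ae_restrict_mem OM_meas).mono (fun q hq => ?_)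
    refine hg.comp ?_ (fun t ht => ⟨(OM_subset hq).1, (OM_subset hq).2, ht⟩)
    exact (Continuous.prodMk continuous_const
      (Continuous.prodMk continuous_const continuous_id)).continuousOn

section Main
variable {T ε α : ℝ} {u1 u2 : ℝ → ℝ → ℝ} {B1 B2 : ℝ → ℝ → ℝ → ℝ}
  (hB1 : ContDiffOn ℝ 2 (fun p : ℝ × ℝ × ℝ => B1 p.1 p.2.1 p.2.2) (KK T))
  (hB2 : ContDiffOn ℝ 2 (fun p : ℝ × ℝ × ℝ => B2 p.1 p.2.1 p.2.2) (KK T))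

include hB1 hB2 in
/-- differentiation under the integral sign -/
lemma F_hasDeriv (hT : 0 < T) {t₀ : ℝ} (ht₀ : t₀ ∈ Set.Ioo 0 T) :
    HasDerivAt (fun t => ∫ q in OM, BSQ B1 B2 (IOTA t q))
      (∫ q in OM, TDER T B1 B2 (IOTA t₀ q)) t₀ := by
  set ε₀ : ℝ := min t₀ (T - t₀) with hε₀
  have hε₀pos : 0 < ε₀ := lt_min ht₀.1 (sub_pos.mpr ht₀.2)
  have hball : Metric.ball t₀ ε₀ ⊆ Set.Ioo 0 T := by
    intro s hs
    rw [Metric.mem_ball, Real.dist_eq, abs_lt] at hs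
    constructor
    · nlinarith [min_le_left t₀ (T - t₀)]
    · nlinarith [min_le_right t₀ (T - t₀)]
  obtain ⟨C, hC⟩ := (isCompact_Icc.prod (isCompact_Icc.prod isCompact_Icc)).exists_bound_of_continuousOn
    (contTDER hB1 hB2 hT)
  have key := hasDerivAt_integral_of_dominated_loc_of_deriv_le
    (F := fun t (q : ℝ × ℝ) => BSQ B1 B2 (IOTA t q))
    (F' := fun t (q : ℝ × ℝ) => TDER T B1 B2 (IOTA t q))
    (μ := volume.restrict OM) (x₀ := t₀) (bound := fun _ => C)
    (Metric.ball_mem_nhds t₀ hε₀pos) ?_ ?_ ?_ ?_ ?_ ?_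
  · exact key.2
  · filter_upwards [Filter.eventually_mem_set.mpr (Metric.ball_mem_nhds t₀ hε₀pos)] with t ht
    exact aesm_slice (contBSQ hB1 hB2) (Set.mem_Icc_of_Ioo (hball ht))
  · exact integrableOn_slice (contBSQ hB1 hB2) (Set.mem_Icc_of_Ioo ht₀)
  · exact aesm_slice (contTDER hB1 hB2 hT) (Set.mem_Icc_of_Ioo ht₀)
  · refine (MeasureTheory.ae_restrict_mem OM_meas).mono (fun q hq t ht => ?_)
    exact hC _ ⟨(OM_subset hq).1, (OM_subset hq).2, Set.mem_Icc_of_Ioo (hball ht)⟩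
  · rw [MeasureTheory.integrable_const_iff]
    right
    refine isFiniteMeasure_restrict.mpr (ne_of_lt ?_)
    exact lt_of_le_of_lt (measure_mono OM_subset) (isCompact_Icc.prod isCompact_Icc).measure_lt_top
  · refine (MeasureTheory.ae_restrict_mem OM_meas).mono (fun q hq t ht => ?_)
    have h1 := pdt_hasDeriv hB1 (Set.mem_Icc_of_Ioo hq.1) (Set.mem_Icc_of_Ioo hq.2) (hball ht)
    have h2 := pdt_hasDeriv hB2 (Set.mem_Icc_of_Ioo hq.1) (Set.mem_Icc_of_Ioo hq.2) (hball ht)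
    have h3 := (h1.pow 2).add (h2.pow 2)
    have h4 : HasDerivAt (fun s => BSQ B1 B2 (IOTA s q))
        ((2:ℕ) * B1 q.1 q.2 t ^ (2 - 1) * DF T B1 (q.1, q.2, t) (0, 0, 1)
          + (2:ℕ) * B2 q.1 q.2 t ^ (2 - 1) * DF T B2 (q.1, q.2, t) (0, 0, 1)) t := h3
    have h5 : TDER T B1 B2 (IOTA t q)
        = (2:ℕ) * B1 q.1 q.2 t ^ (2 - 1) * DF T B1 (q.1, q.2, t) (0, 0, 1)
          + (2:ℕ) * B2 q.1 q.2 t ^ (2 - 1) * DF T B2 (q.1, q.2, t) (0, 0, 1) := by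
      simp [TDER, IOTA]
    show HasDerivAt (fun s => BSQ B1 B2 (IOTA s q)) (TDER T B1 B2 (IOTA t q)) t
    rw [h5]
    exact h4

end Main
end
noncomputable section
open Set MeasureTheory

section Main2
variable {T ε α : ℝ} {u1 u2 : ℝ → ℝ → ℝ} {B1 B2 : ℝ → ℝ → ℝ → ℝ}

lemma deriv_bound (hT : 0 < T)
    (hu1 : ContDiffOn ℝ 1 (fun p : ℝ × ℝ => u1 p.1 p.2) QQ)
    (hu2 : ContDiffOn ℝ 1 (fun p : ℝ × ℝ => u2 p.1 p.2) QQ)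
    (hB1 : ContDiffOn ℝ 2 (fun p : ℝ × ℝ × ℝ => B1 p.1 p.2.1 p.2.2) (KK T))
    (hB2 : ContDiffOn ℝ 2 (fun p : ℝ × ℝ × ℝ => B2 p.1 p.2.1 p.2.2) (KK T))
    (hα : ∀ x y : ℝ, x ∈ Set.Icc (0:ℝ) 1 → y ∈ Set.Icc (0:ℝ) 1 → ∀ ξ1 ξ2 : ℝ,
      2 * (-(pdy2 u2 x y) * ξ1 ^ 2 + pdy2 u1 x y * ξ1 * ξ2 + pdx2 u2 x y * ξ1 * ξ2
            - pdx2 u1 x y * ξ2 ^ 2)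
        + (pdx2 u1 x y + pdy2 u2 x y) * (ξ1 ^ 2 + ξ2 ^ 2)
      ≤ 2 * α * (ξ1 ^ 2 + ξ2 ^ 2))
    (hpde1 : ∀ x y t : ℝ, x ∈ Set.Ioo (0:ℝ) 1 → y ∈ Set.Ioo (0:ℝ) 1 → t ∈ Set.Ioo 0 T →
      pdt B1 x y t + u1 x y * pdx B1 x y t + u2 x y * pdy B1 x y t
        + pdy2 u2 x y * B1 x y t - pdy2 u1 x y * B2 x y t
      = ε * (pdy (pdy B1) x y t - pdx (pdy B2) x y t))
    (hpde2 : ∀ x y t : ℝ, x ∈ Set.Ioo (0:ℝ) 1 → y ∈ Set.Ioo (0:ℝ) 1 → t ∈ Set.Ioo 0 T →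
      pdt B2 x y t + u1 x y * pdx B2 x y t + u2 x y * pdy B2 x y t
        - pdx2 u2 x y * B1 x y t + pdx2 u1 x y * B2 x y t
      = ε * (pdx (pdx B2) x y t - pdx (pdy B1) x y t))
    (hbc : ∀ x y t : ℝ, x ∈ Set.Icc (0:ℝ) 1 → y ∈ Set.Icc (0:ℝ) 1 → t ∈ Set.Icc 0 T →
      (x = 0 ∨ x = 1 ∨ y = 0 ∨ y = 1) → B1 x y t = 0 ∧ B2 x y t = 0)
    {t₀ : ℝ} (ht₀ : t₀ ∈ Set.Ioo 0 T) :
    (∫ q in OM, TDER T B1 B2 (IOTA t₀ q)) ≤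
      2 * α * (∫ q in OM, BSQ B1 B2 (IOTA t₀ q))
        - 2 * ε * (∫ q in OM, (OMG T B1 B2 (IOTA t₀ q)) ^ 2) := by
  have htI : t₀ ∈ Set.Icc 0 T := Set.mem_Icc_of_Ioo ht₀
  -- the divergence integrand
  set DV : ℝ × ℝ → ℝ :=
    fun q => W1' T ε u1 B1 B2 t₀ q (1, 0) + W2' T ε u2 B1 B2 t₀ q (0, 1) with hDV
  have hDVcont : ContinuousOn DV QQ :=
    (contW1'v hu1 hB1 hB2 hT htI _).add (contW2'v hu2 hB1 hB2 hT htI _)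
  have hDVint : IntegrableOn DV OM :=
    (hDVcont.integrableOn_compact (by rw [QQ_eq]; exact isCompact_Icc)).mono_set OM_subset
  have hBSQint : IntegrableOn (fun q : ℝ × ℝ => BSQ B1 B2 (IOTA t₀ q)) OM :=
    integrableOn_slice (contBSQ hB1 hB2) htI
  have hOMGint : IntegrableOn (fun q : ℝ × ℝ => (OMG T B1 B2 (IOTA t₀ q)) ^ 2) OM :=
    integrableOn_slice ((contOMG hB1 hB2 hT).pow 2) htI
  have hTDERint : IntegrableOn (fun q : ℝ × ℝ => TDER T B1 B2 (IOTA t₀ q)) OM :=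
    integrableOn_slice (contTDER hB1 hB2 hT) htI
  -- pointwise bound and integration
  have hmono : (∫ q in OM, TDER T B1 B2 (IOTA t₀ q)) ≤
      ∫ q in OM, (DV q + 2 * α * BSQ B1 B2 (IOTA t₀ q)
        - 2 * ε * (OMG T B1 B2 (IOTA t₀ q)) ^ 2) := by
    refine setIntegral_mono_on hTDERint ?_ OM_meas ?_
    · exact (hDVint.add (hBSQint.const_mul _)).sub (hOMGint.const_mul _)
    · intro q hq
      exact pointwise_bound hT hu1 hu2 hB1 hB2 hα hpde1 hpde2 hq.1 hq.2 ht₀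
  have hsplit : ∫ q in OM, (DV q + 2 * α * BSQ B1 B2 (IOTA t₀ q)
      - 2 * ε * (OMG T B1 B2 (IOTA t₀ q)) ^ 2)
      = (∫ q in OM, DV q) + 2 * α * (∫ q in OM, BSQ B1 B2 (IOTA t₀ q))
        - 2 * ε * (∫ q in OM, (OMG T B1 B2 (IOTA t₀ q)) ^ 2) := by
    have e1 : ∫ q in OM, (DV q + 2 * α * BSQ B1 B2 (IOTA t₀ q)
        - 2 * ε * (OMG T B1 B2 (IOTA t₀ q)) ^ 2)
        = (∫ q in OM, (DV q + 2 * α * BSQ B1 B2 (IOTA t₀ q)))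
          - ∫ q in OM, 2 * ε * (OMG T B1 B2 (IOTA t₀ q)) ^ 2 :=
      integral_sub (hDVint.add (hBSQint.const_mul _)) (hOMGint.const_mul _)
    have e2 : (∫ q in OM, (DV q + 2 * α * BSQ B1 B2 (IOTA t₀ q)))
        = (∫ q in OM, DV q) + ∫ q in OM, 2 * α * BSQ B1 B2 (IOTA t₀ q) :=
      integral_add hDVint (hBSQint.const_mul _)
    have e3 : (∫ q in OM, 2 * α * BSQ B1 B2 (IOTA t₀ q))
        = 2 * α * ∫ q in OM, BSQ B1 B2 (IOTA t₀ q) := integral_const_mul _ _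
    have e4 : (∫ q in OM, 2 * ε * (OMG T B1 B2 (IOTA t₀ q)) ^ 2)
        = 2 * ε * ∫ q in OM, (OMG T B1 B2 (IOTA t₀ q)) ^ 2 := integral_const_mul _ _
    rw [e1, e2, e3, e4]
  have hdivzero : (∫ q in OM, DV q) = 0 := by
    rw [setIntegral_congr_set OM_ae]
    exact divint_zero hu1 hu2 hB1 hB2 hbc hT ht₀
  rw [hsplit, hdivzero] at hmono
  linarith [hmono]

end Main2
end

/-- Energy estimate for the resistive induction equation on the unit square
with homogeneous Dirichlet boundary conditions:
`∫_Ω |B(t)|² + 2ε ∫₀ᵗ e^{2α(t−s)} ∫_Ω (∂_x B² − ∂_y B¹)²(s) ds ≤ e^{2αt} ∫_Ω |B(0)|²`. -/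
theorem stmt1 (T ε α : ℝ) (hT : 0 < T) (hε : 0 < ε)
    (u1 u2 : ℝ → ℝ → ℝ) (B1 B2 : ℝ → ℝ → ℝ → ℝ)
    (hu1 : ContDiffOn ℝ 1 (fun p : ℝ × ℝ => u1 p.1 p.2) (Set.Icc 0 1 ×ˢ Set.Icc 0 1))
    (hu2 : ContDiffOn ℝ 1 (fun p : ℝ × ℝ => u2 p.1 p.2) (Set.Icc 0 1 ×ˢ Set.Icc 0 1))
    (hB1 : ContDiffOn ℝ 2 (fun p : ℝ × ℝ × ℝ => B1 p.1 p.2.1 p.2.2)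
      (Set.Icc 0 1 ×ˢ Set.Icc 0 1 ×ˢ Set.Icc 0 T))
    (hB2 : ContDiffOn ℝ 2 (fun p : ℝ × ℝ × ℝ => B2 p.1 p.2.1 p.2.2)
      (Set.Icc 0 1 ×ˢ Set.Icc 0 1 ×ˢ Set.Icc 0 T))
    (hα : ∀ x y : ℝ, x ∈ Set.Icc (0:ℝ) 1 → y ∈ Set.Icc (0:ℝ) 1 → ∀ ξ1 ξ2 : ℝ,
      2 * (-(pdy2 u2 x y) * ξ1 ^ 2 + pdy2 u1 x y * ξ1 * ξ2 + pdx2 u2 x y * ξ1 * ξ2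
            - pdx2 u1 x y * ξ2 ^ 2)
        + (pdx2 u1 x y + pdy2 u2 x y) * (ξ1 ^ 2 + ξ2 ^ 2)
      ≤ 2 * α * (ξ1 ^ 2 + ξ2 ^ 2))
    (hpde1 : ∀ x y t : ℝ, x ∈ Set.Ioo (0:ℝ) 1 → y ∈ Set.Ioo (0:ℝ) 1 → t ∈ Set.Ioo 0 T →
      pdt B1 x y t + u1 x y * pdx B1 x y t + u2 x y * pdy B1 x y t
        + pdy2 u2 x y * B1 x y t - pdy2 u1 x y * B2 x y t
      = ε * (pdy (pdy B1) x y t - pdx (pdy B2) x y t))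
    (hpde2 : ∀ x y t : ℝ, x ∈ Set.Ioo (0:ℝ) 1 → y ∈ Set.Ioo (0:ℝ) 1 → t ∈ Set.Ioo 0 T →
      pdt B2 x y t + u1 x y * pdx B2 x y t + u2 x y * pdy B2 x y t
        - pdx2 u2 x y * B1 x y t + pdx2 u1 x y * B2 x y t
      = ε * (pdx (pdx B2) x y t - pdx (pdy B1) x y t))
    (hbc : ∀ x y t : ℝ, x ∈ Set.Icc (0:ℝ) 1 → y ∈ Set.Icc (0:ℝ) 1 → t ∈ Set.Icc 0 T →
      (x = 0 ∨ x = 1 ∨ y = 0 ∨ y = 1) → B1 x y t = 0 ∧ B2 x y t = 0) :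
    ∀ t ∈ Set.Icc 0 T,
      (∫ q in Set.Ioo (0:ℝ) 1 ×ˢ Set.Ioo (0:ℝ) 1,
          ((B1 q.1 q.2 t) ^ 2 + (B2 q.1 q.2 t) ^ 2))
        + 2 * ε * ∫ s in (0:ℝ)..t, Real.exp (2 * α * (t - s)) *
            ∫ q in Set.Ioo (0:ℝ) 1 ×ˢ Set.Ioo (0:ℝ) 1,
              (pdx B2 q.1 q.2 s - pdy B1 q.1 q.2 s) ^ 2
      ≤ Real.exp (2 * α * t) * ∫ q in Set.Ioo (0:ℝ) 1 ×ˢ Set.Ioo (0:ℝ) 1,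
            ((B1 q.1 q.2 0) ^ 2 + (B2 q.1 q.2 0) ^ 2) := by
  intro t ht
  -- notation
  set Fn : ℝ → ℝ := fun s => ∫ q in OM, BSQ B1 B2 (IOTA s q) with hFn
  set Dn : ℝ → ℝ := fun s => ∫ q in OM, (OMG T B1 B2 (IOTA s q)) ^ 2 with hDn
  set φ : ℝ → ℝ := fun s => Real.exp (-(2 * α) * s) * Dn s with hφ
  set Gr : ℝ → ℝ := fun s => Real.exp (-(2 * α) * s) * Fn s
    + 2 * ε * ∫ r in (0:ℝ)..s, φ r with hGr
  have huIccT : Set.uIcc (0:ℝ) T = Set.Icc 0 T := Set.uIcc_of_le hT.le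
  -- continuity facts
  have hFn_cont : ContinuousOn Fn (Set.Icc 0 T) := cont_integral_slice hT (contBSQ hB1 hB2)
  have hDn_cont : ContinuousOn Dn (Set.Icc 0 T) :=
    cont_integral_slice hT ((contOMG hB1 hB2 hT).pow 2)
  have hexp_cont : ∀ c : ℝ, Continuous (fun s : ℝ => Real.exp (c * s)) := fun c =>
    Real.continuous_exp.comp (continuous_const.mul continuous_id)
  have hφ_cont : ContinuousOn φ (Set.Icc 0 T) := ((hexp_cont _).continuousOn).mul hDn_cont
  have hprim_cont : ContinuousOn (fun s => ∫ r in (0:ℝ)..s, φ r) (Set.Icc 0 T) := by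
    rw [← huIccT]
    refine intervalIntegral.continuousOn_primitive_interval ?_
    rw [huIccT]
    exact hφ_cont.integrableOn_compact isCompact_Icc
  have hGr_cont : ContinuousOn Gr (Set.Icc 0 T) :=
    (((hexp_cont _).continuousOn).mul hFn_cont).add (continuousOn_const.mul hprim_cont)
  -- derivative of Gr on the interior
  have hGr_deriv : ∀ s ∈ Set.Ioo 0 T, HasDerivAt Gr
      (((-(2 * α) * 1) * Real.exp (-(2 * α) * s)) * Fn s
        + Real.exp (-(2 * α) * s) * (∫ q in OM, TDER T B1 B2 (IOTA s q))
        + 2 * ε * φ s) s := by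
    intro s hs
    have hF' : HasDerivAt Fn (∫ q in OM, TDER T B1 B2 (IOTA s q)) s :=
      F_hasDeriv hB1 hB2 hT hs
    have hexp' : HasDerivAt (fun r => Real.exp (-(2 * α) * r))
        (Real.exp (-(2 * α) * s) * (-(2 * α) * 1)) s :=
      ((hasDerivAt_id s).const_mul (-(2 * α))).exp
    have h1 := hexp'.mul hF'
    have hsub : Set.uIcc (0:ℝ) s ⊆ Set.Icc 0 T := by
      rw [Set.uIcc_of_le hs.1.le]
      exact Set.Icc_subset_Icc le_rfl hs.2.le
    have hi : IntervalIntegrable φ volume 0 s := (hφ_cont.mono hsub).intervalIntegrable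
    have hca : ContinuousAt φ s := hφ_cont.continuousAt (Icc_mem_nhds hs.1 hs.2)
    have hsm : StronglyMeasurableAtFilter φ (nhds s) :=
      ⟨Set.Ioo 0 T, isOpen_Ioo.mem_nhds hs,
        (hφ_cont.mono Set.Ioo_subset_Icc_self).aestronglyMeasurable measurableSet_Ioo⟩
    have hprim' : HasDerivAt (fun u => ∫ r in (0:ℝ)..u, φ r) (φ s) s :=
      intervalIntegral.integral_hasDerivAt_right hi hsm hca
    have h2 := hprim'.const_mul (2 * ε)
    have h3 := h1.add h2
    refine HasDerivAt.congr_deriv h3 ?_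
    ring
  -- the derivative is nonpositive
  have hGr_dle : ∀ s ∈ Set.Ioo 0 T,
      (((-(2 * α) * 1) * Real.exp (-(2 * α) * s)) * Fn s
        + Real.exp (-(2 * α) * s) * (∫ q in OM, TDER T B1 B2 (IOTA s q))
        + 2 * ε * φ s) ≤ 0 := by
    intro s hs
    have hdb := deriv_bound hT hu1 hu2 hB1 hB2 hα hpde1 hpde2 hbc hs
    have h3 : Real.exp (-(2 * α) * s) * (∫ q in OM, TDER T B1 B2 (IOTA s q))
        ≤ Real.exp (-(2 * α) * s) * (2 * α * Fn s - 2 * ε * Dn s) :=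
      mul_le_mul_of_nonneg_left hdb (Real.exp_pos _).le
    have hφs : φ s = Real.exp (-(2 * α) * s) * Dn s := rfl
    nlinarith [h3, Real.exp_pos (-(2 * α) * s)]
  -- Gronwall: Gr is antitone
  have hGr_anti : AntitoneOn Gr (Set.Icc 0 T) := by
    refine antitoneOn_of_deriv_nonpos (convex_Icc 0 T) hGr_cont ?_ ?_
    · rw [interior_Icc]
      exact fun s hs => (hGr_deriv s hs).differentiableAt.differentiableWithinAt
    · rw [interior_Icc]
      intro s hs
      rw [(hGr_deriv s hs).deriv]
      exact hGr_dle s hs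
  have hGr_le : Gr t ≤ Gr 0 := hGr_anti ⟨le_refl 0, hT.le⟩ ht ht.1
  have hGr0 : Gr 0 = Fn 0 := by
    rw [hGr]
    simp
  -- rewrite the exponential integral term
  have hDst : ∀ s ∈ Set.uIcc (0:ℝ) t,
      (Real.exp (2 * α * (t - s)) *
        ∫ q in Set.Ioo (0:ℝ) 1 ×ˢ Set.Ioo (0:ℝ) 1,
          (pdx B2 q.1 q.2 s - pdy B1 q.1 q.2 s) ^ 2)
      = Real.exp (2 * α * t) * φ s := by
    intro s hsmem
    rw [Set.uIcc_of_le ht.1] at hsmem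
    have hsT : s ∈ Set.Icc 0 T := ⟨hsmem.1, le_trans hsmem.2 ht.2⟩
    have hD : (∫ q in Set.Ioo (0:ℝ) 1 ×ˢ Set.Ioo (0:ℝ) 1,
        (pdx B2 q.1 q.2 s - pdy B1 q.1 q.2 s) ^ 2) = Dn s := by
      rw [hDn]
      refine setIntegral_congr_fun OM_meas (fun q hq => ?_)
      rw [pdx_eq hB2 hq.1 (Set.mem_Icc_of_Ioo hq.2) hsT,
        pdy_eq hB1 (Set.mem_Icc_of_Ioo hq.1) hq.2 hsT]
      rfl
    rw [hD, hφ]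
    rw [← mul_assoc, ← Real.exp_add]
    congr 2
    ring
  have hIeq : (∫ s in (0:ℝ)..t, Real.exp (2 * α * (t - s)) *
      ∫ q in Set.Ioo (0:ℝ) 1 ×ˢ Set.Ioo (0:ℝ) 1,
        (pdx B2 q.1 q.2 s - pdy B1 q.1 q.2 s) ^ 2)
      = Real.exp (2 * α * t) * ∫ s in (0:ℝ)..t, φ s := by
    rw [intervalIntegral.integral_congr hDst, intervalIntegral.integral_const_mul]
  -- final algebra
  have hmul := mul_le_mul_of_nonneg_left hGr_le (Real.exp_pos (2 * α * t)).le
  have hee : Real.exp (2 * α * t) * Real.exp (-(2 * α) * t) = 1 := by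
    rw [← Real.exp_add, show 2 * α * t + -(2 * α) * t = 0 by ring, Real.exp_zero]
  have hlhs : Real.exp (2 * α * t) * Gr t
      = Fn t + 2 * ε * (Real.exp (2 * α * t) * ∫ s in (0:ℝ)..t, φ s) := by
    rw [hGr]
    simp only []
    rw [mul_add, ← mul_assoc, hee, one_mul]
    ring
  rw [hGr0] at hmul
  rw [hlhs] at hmul
  show Fn t + 2 * ε * (∫ s in (0:ℝ)..t, Real.exp (2 * α * (t - s)) *
      ∫ q in Set.Ioo (0:ℝ) 1 ×ˢ Set.Ioo (0:ℝ) 1,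
        (pdx B2 q.1 q.2 s - pdy B1 q.1 q.2 s) ^ 2)
    ≤ Real.exp (2 * α * t) * Fn 0
  rw [hIeq]
  exact hmul
end

section
/- For every vector grid function V = (V¹,V²): (V, curl²(V))_𝐏 = ‖curl(V)‖_𝐏² + (V¹)ᵀ (𝓤 − 𝓓)(P_x ⊗ I_M) curl(V) − (V²)ᵀ (𝓡 − 𝓛)(I_N ⊗ P_y) curl(V). -/
open Matrix Kronecker

section Aux

variable {l m n p : Type*} [Fintype m] [Fintype p]

lemma kron_sub_left (A B : Matrix l m ℝ) (C : Matrix n p ℝ) :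
    (A - B) ⊗ₖ C = A ⊗ₖ C - B ⊗ₖ C := by
  ext ⟨i, j⟩ ⟨k, r⟩
  simp [Matrix.kroneckerMap_apply, sub_mul]

lemma kron_sub_right (A : Matrix l m ℝ) (B C : Matrix n p ℝ) :
    A ⊗ₖ (B - C) = A ⊗ₖ B - A ⊗ₖ C := by
  ext ⟨i, j⟩ ⟨k, r⟩
  simp [Matrix.kroneckerMap_apply, mul_sub]

lemma kron_transpose (A : Matrix l m ℝ) (B : Matrix n p ℝ) :
    (A ⊗ₖ B)ᵀ = Aᵀ ⊗ₖ Bᵀ := by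
  ext ⟨i, j⟩ ⟨k, r⟩
  simp [Matrix.kroneckerMap_apply]

end Aux

/-- Discrete curl-curl identity:
`(V, curl²(V))_𝐏 = ‖curl(V)‖_𝐏² + (V¹)ᵀ(𝓤−𝓓)(P_x⊗I_M)curl(V) − (V²)ᵀ(𝓡−𝓛)(I_N⊗P_y)curl(V)`. -/
theorem stmt5 (N M : ℕ) (hN : 2 ≤ N) (hM : 2 ≤ M)
    (px : Fin N → ℝ) (hpx : ∀ i, 0 < px i)
    (py : Fin M → ℝ) (hpy : ∀ j, 0 < py j)
    (Qx : Matrix (Fin N) (Fin N) ℝ)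
    (hQx : Qx + Qxᵀ =
        Matrix.diagonal (fun i : Fin N => if (i : ℕ) = N - 1 then (1 : ℝ) else 0)
      - Matrix.diagonal (fun i : Fin N => if (i : ℕ) = 0 then (1 : ℝ) else 0))
    (Qy : Matrix (Fin M) (Fin M) ℝ)
    (hQy : Qy + Qyᵀ =
        Matrix.diagonal (fun j : Fin M => if (j : ℕ) = M - 1 then (1 : ℝ) else 0)
      - Matrix.diagonal (fun j : Fin M => if (j : ℕ) = 0 then (1 : ℝ) else 0))
    (V1 V2 : Fin N × Fin M → ℝ) :
    let Px := Matrix.diagonal px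
    let Py := Matrix.diagonal py
    let IN : Matrix (Fin N) (Fin N) ℝ := 1
    let IM : Matrix (Fin M) (Fin M) ℝ := 1
    let RN : Matrix (Fin N) (Fin N) ℝ :=
      Matrix.diagonal (fun i => if (i : ℕ) = N - 1 then 1 else 0)
    let LN : Matrix (Fin N) (Fin N) ℝ :=
      Matrix.diagonal (fun i => if (i : ℕ) = 0 then 1 else 0)
    let RM : Matrix (Fin M) (Fin M) ℝ :=
      Matrix.diagonal (fun j => if (j : ℕ) = M - 1 then 1 else 0)
    let LM : Matrix (Fin M) (Fin M) ℝ :=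
      Matrix.diagonal (fun j => if (j : ℕ) = 0 then 1 else 0)
    let cR := RN ⊗ₖ IM
    let cL := LN ⊗ₖ IM
    let cU := IN ⊗ₖ RM
    let cD := IN ⊗ₖ LM
    let dx := (Px⁻¹ * Qx) ⊗ₖ IM
    let dy := IN ⊗ₖ (Py⁻¹ * Qy)
    let P := Px ⊗ₖ Py
    let curlV := dx.mulVec V2 - dy.mulVec V1
    let curl2V1 := -(dy.mulVec (dy.mulVec V1)) + dx.mulVec (dy.mulVec V2)
    let curl2V2 := dx.mulVec (dy.mulVec V1) - dx.mulVec (dx.mulVec V2)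
    V1 ⬝ᵥ P.mulVec curl2V1 + V2 ⬝ᵥ P.mulVec curl2V2
      = curlV ⬝ᵥ P.mulVec curlV
        + V1 ⬝ᵥ ((cU - cD) * (Px ⊗ₖ IM)).mulVec curlV
        - V2 ⬝ᵥ ((cR - cL) * (IN ⊗ₖ Py)).mulVec curlV := by
  intro Px Py IN IM RN LN RM LM cR cL cU cD dx dy P curlV curl2V1 curl2V2
  -- invertibility
  have hPxinv : Px * Px⁻¹ = 1 := by
    apply Matrix.mul_nonsing_inv
    rw [Matrix.det_diagonal]
    exact isUnit_iff_ne_zero.mpr (Finset.prod_pos fun i _ => hpx i).ne'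
  have hPyinv : Py * Py⁻¹ = 1 := by
    apply Matrix.mul_nonsing_inv
    rw [Matrix.det_diagonal]
    exact isUnit_iff_ne_zero.mpr (Finset.prod_pos fun j _ => hpy j).ne'
  have hPxA : Px * (Px⁻¹ * Qx) = Qx := by rw [← mul_assoc, hPxinv, one_mul]
  have hPyB : Py * (Py⁻¹ * Qy) = Qy := by rw [← mul_assoc, hPyinv, one_mul]
  -- P * dx and P * dy
  have hPdx : P * dx = Qx ⊗ₖ Py := by
    show Px ⊗ₖ Py * ((Px⁻¹ * Qx) ⊗ₖ IM) = Qx ⊗ₖ Py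
    rw [← Matrix.mul_kronecker_mul, hPxA, mul_one]
  have hPdy : P * dy = Px ⊗ₖ Qy := by
    show Px ⊗ₖ Py * (IN ⊗ₖ (Py⁻¹ * Qy)) = Px ⊗ₖ Qy
    rw [← Matrix.mul_kronecker_mul, hPyB, mul_one]
  -- dx and dy commute
  have hcomm : dx * dy = dy * dx := by
    show (Px⁻¹ * Qx) ⊗ₖ IM * (IN ⊗ₖ (Py⁻¹ * Qy))
        = IN ⊗ₖ (Py⁻¹ * Qy) * ((Px⁻¹ * Qx) ⊗ₖ IM)
    rw [← Matrix.mul_kronecker_mul, ← Matrix.mul_kronecker_mul]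
    simp [IN, IM]
  -- curl² in terms of curl
  have hswap : dx.mulVec (dy.mulVec V2) = dy.mulVec (dx.mulVec V2) := by
    rw [Matrix.mulVec_mulVec, Matrix.mulVec_mulVec, hcomm]
  have hc1 : curl2V1 = dy.mulVec curlV := by
    show -(dy.mulVec (dy.mulVec V1)) + dx.mulVec (dy.mulVec V2)
        = dy.mulVec (dx.mulVec V2 - dy.mulVec V1)
    rw [Matrix.mulVec_sub, hswap]
    abel
  have hc2 : curl2V2 = -(dx.mulVec curlV) := by
    show dx.mulVec (dy.mulVec V1) - dx.mulVec (dx.mulVec V2)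
        = -(dx.mulVec (dx.mulVec V2 - dy.mulVec V1))
    rw [Matrix.mulVec_sub]
    ring
  -- boundary matrices
  have hB1 : (cU - cD) * (Px ⊗ₖ IM) = Px ⊗ₖ (RM - LM) := by
    show (IN ⊗ₖ RM - IN ⊗ₖ LM) * (Px ⊗ₖ IM) = Px ⊗ₖ (RM - LM)
    rw [← kron_sub_right, ← Matrix.mul_kronecker_mul]
    simp [IN, IM]
  have hB2 : (cR - cL) * (IN ⊗ₖ Py) = (RN - LN) ⊗ₖ Py := by
    show (RN ⊗ₖ IM - LN ⊗ₖ IM) * (IN ⊗ₖ Py) = (RN - LN) ⊗ₖ Py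
    rw [← kron_sub_left, ← Matrix.mul_kronecker_mul]
    simp [IN, IM]
  -- SBP splittings
  have hQy' : Qy = (RM - LM) - Qyᵀ := by
    have : Qy + Qyᵀ = RM - LM := hQy
    linear_combination (norm := module) this
  have hQx' : Qx = (RN - LN) - Qxᵀ := by
    have : Qx + Qxᵀ = RN - LN := hQx
    linear_combination (norm := module) this
  -- the two main terms
  have key1 : V1 ⬝ᵥ P.mulVec curl2V1
      = V1 ⬝ᵥ (Px ⊗ₖ (RM - LM)).mulVec curlV - curlV ⬝ᵥ P.mulVec (dy.mulVec V1) := by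
    rw [hc1, Matrix.mulVec_mulVec, hPdy]
    nth_rewrite 1 [hQy']
    rw [show Px ⊗ₖ (RM - LM - Qyᵀ) = Px ⊗ₖ (RM - LM) - Px ⊗ₖ Qyᵀ from kron_sub_right _ _ _,
      Matrix.sub_mulVec, dotProduct_sub]
    have htr : V1 ⬝ᵥ (Px ⊗ₖ Qyᵀ).mulVec curlV = curlV ⬝ᵥ P.mulVec (dy.mulVec V1) := by
      rw [Matrix.dotProduct_mulVec, ← Matrix.mulVec_transpose, kron_transpose,
        Matrix.transpose_transpose, Matrix.diagonal_transpose, Matrix.mulVec_mulVec, ← hPdy,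
        ← Matrix.mulVec_mulVec, dotProduct_comm]
    rw [htr]
  have key2 : V2 ⬝ᵥ P.mulVec curl2V2
      = curlV ⬝ᵥ P.mulVec (dx.mulVec V2) - V2 ⬝ᵥ ((RN - LN) ⊗ₖ Py).mulVec curlV := by
    rw [hc2, Matrix.mulVec_neg, dotProduct_neg, Matrix.mulVec_mulVec, hPdx]
    nth_rewrite 1 [hQx']
    rw [show (RN - LN - Qxᵀ) ⊗ₖ Py = (RN - LN) ⊗ₖ Py - Qxᵀ ⊗ₖ Py from kron_sub_left _ _ _,
      Matrix.sub_mulVec, dotProduct_sub]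
    have : V2 ⬝ᵥ (Qxᵀ ⊗ₖ Py).mulVec curlV = curlV ⬝ᵥ P.mulVec (dx.mulVec V2) := by
      rw [Matrix.dotProduct_mulVec, ← Matrix.mulVec_transpose, kron_transpose,
        Matrix.transpose_transpose, Matrix.diagonal_transpose, Matrix.mulVec_mulVec, ← hPdx,
        ← Matrix.mulVec_mulVec, dotProduct_comm]
    rw [this]
    ring
  rw [key1, key2, hB1, hB2]
  have hsplit : curlV ⬝ᵥ P.mulVec curlV
      = curlV ⬝ᵥ P.mulVec (dx.mulVec V2) - curlV ⬝ᵥ P.mulVec (dy.mulVec V1) := by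
    rw [← dotProduct_sub, ← Matrix.mulVec_sub]
  rw [hsplit]
  ring
end

section
/- For every scalar grid function u ∈ ℝ^{NM} and every vector grid function V = (V¹,V²): (V, u∘𝔡_x V)_𝐏 = (1/2)[(V¹)ᵀ(𝓡−𝓛)(I_N⊗P_y)(u∘V¹) + (V²)ᵀ(𝓡−𝓛)(I_N⊗P_y)(u∘V²)] + (1/2)(u∘𝔡_x V − 𝔡_x(u∘V), V)_𝐏, and (V, u∘𝔡_y V)_𝐏 = (1/2)[(V¹)ᵀ(𝓤−𝓓)(P_x⊗I_M)(u∘V¹) + (V²)ᵀ(𝓤−𝓓)(P_x⊗I_M)(u∘V²)] + (1/2)(u∘𝔡_y V − 𝔡_y(u∘V), V)_𝐏. -/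
open Matrix Kronecker

lemma sbp_split {ι : Type*} [Fintype ι] [DecidableEq ι]
    (d : ι → ℝ) (D A : Matrix ι ι ℝ) (hA : Matrix.diagonal d * D = A)
    (u V : ι → ℝ) :
    V ⬝ᵥ (Matrix.diagonal d).mulVec (fun k => u k * D.mulVec V k)
    = (1/2) * (V ⬝ᵥ (A + Aᵀ).mulVec (fun k => u k * V k))
    + (1/2) * ((fun k => u k * D.mulVec V k - D.mulVec (fun l => u l * V l) k)
        ⬝ᵥ (Matrix.diagonal d).mulVec V) := by
  set w : ι → ℝ := fun k => u k * V k with hw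
  have h1 : (fun k => u k * D.mulVec V k) ⬝ᵥ (Matrix.diagonal d).mulVec V
      = w ⬝ᵥ A.mulVec V := by
    rw [← hA, ← Matrix.mulVec_mulVec]
    simp only [dotProduct, Matrix.mulVec_diagonal]
    exact Finset.sum_congr rfl fun k _ => by ring
  have h2 : V ⬝ᵥ (Matrix.diagonal d).mulVec (fun k => u k * D.mulVec V k)
      = w ⬝ᵥ A.mulVec V := by
    rw [← h1]
    simp only [dotProduct, Matrix.mulVec_diagonal]
    exact Finset.sum_congr rfl fun k _ => by ring
  have h3 : (D.mulVec w) ⬝ᵥ (Matrix.diagonal d).mulVec V = V ⬝ᵥ A.mulVec w := by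
    rw [← hA, ← Matrix.mulVec_mulVec]
    simp only [dotProduct, Matrix.mulVec_diagonal]
    exact Finset.sum_congr rfl fun k _ => by ring
  have h4 : w ⬝ᵥ A.mulVec V = V ⬝ᵥ Aᵀ.mulVec w := by
    rw [Matrix.dotProduct_mulVec, ← Matrix.mulVec_transpose, dotProduct_comm]
  have h5 : (fun k => u k * D.mulVec V k - D.mulVec w k) ⬝ᵥ (Matrix.diagonal d).mulVec V
      = w ⬝ᵥ A.mulVec V - V ⬝ᵥ A.mulVec w := by
    rw [← h1, ← h3, ← sub_dotProduct]
    rfl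
  rw [h2, h5, Matrix.add_mulVec, dotProduct_add, h4]
  ring

lemma sub_kron {l m n p : Type*} (A B : Matrix l m ℝ) (C : Matrix n p ℝ) :
    (A - B) ⊗ₖ C = A ⊗ₖ C - B ⊗ₖ C := by
  ext i j
  simp [Matrix.kroneckerMap_apply, Matrix.sub_apply, sub_mul]

lemma kron_sub {l m n p : Type*} (A : Matrix l m ℝ) (B C : Matrix n p ℝ) :
    A ⊗ₖ (B - C) = A ⊗ₖ B - A ⊗ₖ C := by
  ext i j
  simp [Matrix.kroneckerMap_apply, Matrix.sub_apply, mul_sub]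

/-- Splitting identities for the variable-coefficient convective terms:
`(V, u∘𝔡_x V)_𝐏 = ½ Vᵀ(𝓡−𝓛)(I_N⊗P_y)(u∘V) + ½(u∘𝔡_x V − 𝔡_x(u∘V), V)_𝐏`
and the analogue in `y`. -/
theorem stmt6 (N M : ℕ) (hN : 2 ≤ N) (hM : 2 ≤ M)
    (px : Fin N → ℝ) (hpx : ∀ i, 0 < px i)
    (py : Fin M → ℝ) (hpy : ∀ j, 0 < py j)
    (Qx : Matrix (Fin N) (Fin N) ℝ)
    (hQx : Qx + Qxᵀ =
        Matrix.diagonal (fun i : Fin N => if (i : ℕ) = N - 1 then (1 : ℝ) else 0)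
      - Matrix.diagonal (fun i : Fin N => if (i : ℕ) = 0 then (1 : ℝ) else 0))
    (Qy : Matrix (Fin M) (Fin M) ℝ)
    (hQy : Qy + Qyᵀ =
        Matrix.diagonal (fun j : Fin M => if (j : ℕ) = M - 1 then (1 : ℝ) else 0)
      - Matrix.diagonal (fun j : Fin M => if (j : ℕ) = 0 then (1 : ℝ) else 0))
    (u : Fin N × Fin M → ℝ)
    (V1 V2 : Fin N × Fin M → ℝ) :
    let Px := Matrix.diagonal px
    let Py := Matrix.diagonal py
    let IN : Matrix (Fin N) (Fin N) ℝ := 1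
    let IM : Matrix (Fin M) (Fin M) ℝ := 1
    let RN : Matrix (Fin N) (Fin N) ℝ :=
      Matrix.diagonal (fun i => if (i : ℕ) = N - 1 then 1 else 0)
    let LN : Matrix (Fin N) (Fin N) ℝ :=
      Matrix.diagonal (fun i => if (i : ℕ) = 0 then 1 else 0)
    let RM : Matrix (Fin M) (Fin M) ℝ :=
      Matrix.diagonal (fun j => if (j : ℕ) = M - 1 then 1 else 0)
    let LM : Matrix (Fin M) (Fin M) ℝ :=
      Matrix.diagonal (fun j => if (j : ℕ) = 0 then 1 else 0)
    let cR := RN ⊗ₖ IM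
    let cL := LN ⊗ₖ IM
    let cU := IN ⊗ₖ RM
    let cD := IN ⊗ₖ LM
    let dx := (Px⁻¹ * Qx) ⊗ₖ IM
    let dy := IN ⊗ₖ (Py⁻¹ * Qy)
    let P := Px ⊗ₖ Py
    (V1 ⬝ᵥ P.mulVec (fun k => u k * dx.mulVec V1 k)
      + V2 ⬝ᵥ P.mulVec (fun k => u k * dx.mulVec V2 k)
      = (1/2) * (V1 ⬝ᵥ ((cR - cL) * (IN ⊗ₖ Py)).mulVec (fun k => u k * V1 k)
                  + V2 ⬝ᵥ ((cR - cL) * (IN ⊗ₖ Py)).mulVec (fun k => u k * V2 k))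
        + (1/2) * ((fun k => u k * dx.mulVec V1 k - dx.mulVec (fun l => u l * V1 l) k)
                      ⬝ᵥ P.mulVec V1
                  + (fun k => u k * dx.mulVec V2 k - dx.mulVec (fun l => u l * V2 l) k)
                      ⬝ᵥ P.mulVec V2))
    ∧ (V1 ⬝ᵥ P.mulVec (fun k => u k * dy.mulVec V1 k)
      + V2 ⬝ᵥ P.mulVec (fun k => u k * dy.mulVec V2 k)
      = (1/2) * (V1 ⬝ᵥ ((cU - cD) * (Px ⊗ₖ IM)).mulVec (fun k => u k * V1 k)
                  + V2 ⬝ᵥ ((cU - cD) * (Px ⊗ₖ IM)).mulVec (fun k => u k * V2 k))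
        + (1/2) * ((fun k => u k * dy.mulVec V1 k - dy.mulVec (fun l => u l * V1 l) k)
                      ⬝ᵥ P.mulVec V1
                  + (fun k => u k * dy.mulVec V2 k - dy.mulVec (fun l => u l * V2 l) k)
                      ⬝ᵥ P.mulVec V2)) := by
  intro Px Py IN IM RN LN RM LM cR cL cU cD dx dy P
  set d : Fin N × Fin M → ℝ := fun k => px k.1 * py k.2 with hd
  have hP : P = Matrix.diagonal d := Matrix.diagonal_kronecker_diagonal px py
  -- invertibility
  have hPxinv : Px * Px⁻¹ = 1 := by
    apply Matrix.mul_nonsing_inv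
    rw [Matrix.det_diagonal]
    exact IsUnit.mk0 _ (Finset.prod_ne_zero_iff.2 fun i _ => (hpx i).ne')
  have hPyinv : Py * Py⁻¹ = 1 := by
    apply Matrix.mul_nonsing_inv
    rw [Matrix.det_diagonal]
    exact IsUnit.mk0 _ (Finset.prod_ne_zero_iff.2 fun j _ => (hpy j).ne')
  have hPyT : Pyᵀ = Py := Matrix.diagonal_transpose py
  have hPxT : Pxᵀ = Px := Matrix.diagonal_transpose px
  -- x direction
  have hAx : Matrix.diagonal d * dx = Qx ⊗ₖ Py := by
    rw [← hP]
    show (Px ⊗ₖ Py) * ((Px⁻¹ * Qx) ⊗ₖ IM) = Qx ⊗ₖ Py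
    rw [← Matrix.mul_kronecker_mul, ← Matrix.mul_assoc, hPxinv, Matrix.one_mul,
      Matrix.mul_one]
  have hsumx : Qx ⊗ₖ Py + (Qx ⊗ₖ Py)ᵀ = (cR - cL) * (IN ⊗ₖ Py) := by
    rw [← Matrix.kroneckerMap_transpose, hPyT, ← Matrix.add_kronecker, hQx]
    show (RN - LN) ⊗ₖ Py = (cR - cL) * (IN ⊗ₖ Py)
    have : cR - cL = (RN - LN) ⊗ₖ IM := (sub_kron RN LN IM).symm
    rw [this, ← Matrix.mul_kronecker_mul, Matrix.mul_one, Matrix.one_mul]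
  -- y direction
  have hAy : Matrix.diagonal d * dy = Px ⊗ₖ Qy := by
    rw [← hP]
    show (Px ⊗ₖ Py) * (IN ⊗ₖ (Py⁻¹ * Qy)) = Px ⊗ₖ Qy
    rw [← Matrix.mul_kronecker_mul, ← Matrix.mul_assoc, hPyinv, Matrix.one_mul,
      Matrix.mul_one]
  have hsumy : Px ⊗ₖ Qy + (Px ⊗ₖ Qy)ᵀ = (cU - cD) * (Px ⊗ₖ IM) := by
    rw [← Matrix.kroneckerMap_transpose, hPxT, ← Matrix.kronecker_add, hQy]
    show Px ⊗ₖ (RM - LM) = (cU - cD) * (Px ⊗ₖ IM)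
    have : cU - cD = IN ⊗ₖ (RM - LM) := (kron_sub IN RM LM).symm
    rw [this, ← Matrix.mul_kronecker_mul, Matrix.mul_one, Matrix.one_mul]
  constructor
  · rw [hP, sbp_split d dx (Qx ⊗ₖ Py) hAx u V1, sbp_split d dx (Qx ⊗ₖ Py) hAx u V2,
      hsumx]
    ring
  · rw [hP, sbp_split d dy (Px ⊗ₖ Qy) hAy u V1, sbp_split d dy (Px ⊗ₖ Qy) hAy u V2,
      hsumy]
    ring
end
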